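/- arXiv:1902.03723 — 4 statements merged into one kernel-verified Lean document; each statement's English description precedes it below -/
import Mathlib

section
/- Let Ω ⊆ ℝⁿ be an open set, and let a₁,…,a_N : ℝⁿ → ℝၿ be smooth maps each with vanishing Euclidean divergence (∑ⱼ ∂(a_k)ⱼ/∂xⱼ = 0 for each k). For a differentiable function u define X_k u(x) = a_k(x)·∇u(x) and ∇_X u = (X₁u,…,X_N u). Then for every p > 1, every smooth map g = (g₁,…,g_N) : Ω → ℝᴺ, and every f ∈ C₀^∞(Ω), one has ∫_Ω |∇_X f(x)|^p dx ≥ ∫_Ω ( ∑_{k=1}^N X_k g_k(x) − (p−1) |g(x)|^{p/(p−1)} ) |f(x)|^p dx, where |g| is the Euclidean norm of g in ℝᴺ. -/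
/-!
Write `φ = |f|^p`, which is `C¹` with `X_k φ = p |f|^(p-2) f X_k f`. Since `a_k` is divergence
free, `div (g_k φ a_k) = (X_k g_k) φ + g_k X_k φ`, and this compactly supported divergence has
integral zero. Hence the right-hand side equals `∫ (-∑ g_k X_k φ - (p-1) |g|^q φ)` with
`q = p/(p-1)`, and the integrand is bounded by `|∇_X f|^p` pointwise: by Cauchy–Schwarz
`-∑ g_k X_k φ ≤ p |g| |f|^(p-1) |∇_X f|`, and by Young's inequality
`p A B ≤ A^p + (p-1) B^q` with `A = |∇_X f|`, `B = |g| |f|^(p-1)`.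
-/

open MeasureTheory Real

theorem Real.mul_mul_le_rpow_add_sub_one_mul_rpow {p A B : ℝ} (hp : 1 < p) (hA : 0 ≤ A)
    (hB : 0 ≤ B) : p * A * B ≤ A ^ p + (p - 1) * B ^ (p / (p - 1)) := by
  have hpq := Real.HolderConjugate.conjExponent hp
  have hp1 : p - 1 ≠ 0 := by linarith
  calc p * A * B = p * (A * B) := mul_assoc _ _ _
    _ ≤ p * (A ^ p / p + B ^ p.conjExponent / p.conjExponent) :=
        mul_le_mul_of_nonneg_left (young_inequality_of_nonneg hA hB hpq) (by linarith)
    _ = A ^ p + (p - 1) * B ^ (p / (p - 1)) := by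
        rw [Real.conjExponent]; field_simp

theorem neg_mul_sum_mul_sub_le {ι : Type*} [Fintype ι] {p : ℝ} (hp : 1 < p) (w v : ι → ℝ)
    (t : ℝ) :
    -(p * |t| ^ (p - 2) * t * ∑ k, w k * v k)
        - (p - 1) * (∑ k, w k ^ 2) ^ (p / (2 * (p - 1))) * |t| ^ p
      ≤ (∑ k, v k ^ 2) ^ (p / 2) := by
  have hw : 0 ≤ ∑ k, w k ^ 2 := by positivity
  have hv : 0 ≤ ∑ k, v k ^ 2 := by positivity
  have hcoeff : |p * |t| ^ (p - 2) * t| = p * |t| ^ (p - 1) := by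
    rcases eq_or_ne t 0 with rfl | ht
    · simp [zero_rpow (by linarith : p - 1 ≠ 0)]
    · rw [abs_mul, abs_mul, abs_of_pos (by linarith : 0 < p), abs_of_nonneg (by positivity),
        show p - 1 = p - 2 + 1 by ring, rpow_add_one (abs_ne_zero.2 ht), mul_assoc]
  have hcs : |∑ k, w k * v k| ≤ √(∑ k, w k ^ 2) * √(∑ k, v k ^ 2) := by
    refine abs_le.2 ⟨?_, sum_mul_le_sqrt_mul_sqrt _ _ _⟩
    exact neg_le.1 (by simpa using sum_mul_le_sqrt_mul_sqrt Finset.univ (fun k => -w k) v)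
  have hyoung := mul_mul_le_rpow_add_sub_one_mul_rpow hp (sqrt_nonneg (∑ k, v k ^ 2))
    (mul_nonneg (sqrt_nonneg (∑ k, w k ^ 2)) (rpow_nonneg (abs_nonneg t) (p - 1)))
  have hA : √(∑ k, v k ^ 2) ^ p = (∑ k, v k ^ 2) ^ (p / 2) := by
    rw [sqrt_eq_rpow, ← rpow_mul hv]; ring_nf
  have hB : (√(∑ k, w k ^ 2) * |t| ^ (p - 1)) ^ (p / (p - 1))
      = (∑ k, w k ^ 2) ^ (p / (2 * (p - 1))) * |t| ^ p := by
    rw [mul_rpow (sqrt_nonneg _) (by positivity), sqrt_eq_rpow, ← rpow_mul hw,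
      ← rpow_mul (abs_nonneg t)]
    have : p - 1 ≠ 0 := by linarith
    congr 2 <;> field_simp
  rw [hA, hB] at hyoung
  have hneg := neg_le_abs (p * |t| ^ (p - 2) * t * ∑ k, w k * v k)
  rw [abs_mul, hcoeff] at hneg
  have hcs' := mul_le_mul_of_nonneg_left hcs (by positivity : 0 ≤ p * |t| ^ (p - 1))
  linarith

theorem ContDiff.abs_rpow {E : Type*} [NormedAddCommGroup E] [NormedSpace ℝ E] {f : E → ℝ}
    (hf : ContDiff ℝ 1 f) {p : ℝ} (hp : 1 < p) : ContDiff ℝ 1 fun x => |f x| ^ p := by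
  simpa only [norm_eq_abs] using hf.norm_rpow hp

theorem fderiv_abs_rpow_apply {E : Type*} [NormedAddCommGroup E] [NormedSpace ℝ E] {f : E → ℝ}
    {x : E} (hf : DifferentiableAt ℝ f x) {p : ℝ} (hp : 1 < p) (v : E) :
    fderiv ℝ (fun y => |f y| ^ p) x v = p * |f x| ^ (p - 2) * f x * fderiv ℝ f x v := by
  have hφ : HasFDerivAt (fun y => |f y| ^ p) ((p * |f x| ^ (p - 2) * f x) • fderiv ℝ f x) x :=
    (hasDerivAt_abs_rpow (f x) hp).comp_hasFDerivAt x hf.hasFDerivAt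
  rw [hφ.fderiv, smul_apply, smul_eq_mul]

theorem ContDiffOn.contDiff_of_tsupport_subset {𝕜 E F : Type*} [NontriviallyNormedField 𝕜]
    [NormedAddCommGroup E] [NormedSpace 𝕜 E] [NormedAddCommGroup F] [NormedSpace 𝕜 F]
    {n : WithTop ℕ∞} {f : E → F} {s : Set E} (hf : ContDiffOn 𝕜 n f s) (hs : IsOpen s)
    (hsupp : tsupport f ⊆ s) : ContDiff 𝕜 n f := by
  refine contDiff_iff_contDiffAt.2 fun x => ?_
  by_cases hx : x ∈ s
  · exact hf.contDiffAt (hs.mem_nhds hx)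
  · exact contDiffAt_const.congr_of_eventuallyEq
      (notMem_tsupport_iff_eventuallyEq.1 fun h => hx (hsupp h))

theorem ContinuousOn.integrableOn_of_eq_zero_off_isCompact {X E : Type*} [MeasurableSpace X]
    [TopologicalSpace X] [OpensMeasurableSpace X] [T2Space X] [NormedAddCommGroup E]
    {μ : Measure X} [IsFiniteMeasureOnCompacts μ] {h : X → E} {s K : Set X}
    (hh : ContinuousOn h s) (hs : MeasurableSet s) (hK : IsCompact K) (hKs : K ⊆ s)
    (h0 : ∀ x ∉ K, h x = 0) : IntegrableOn h s μ :=
  ((hh.mono hKs).integrableOn_compact hK).of_forall_sdiff_eq_zero hs fun x hx => h0 x hx.2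

section Divergence

variable {ι : Type*} [Fintype ι] [DecidableEq ι]

noncomputable def divergence (F : (ι → ℝ) → ι → ℝ) (x : ι → ℝ) : ℝ :=
  ∑ j, fderiv ℝ (fun y => F y j) x (Pi.single j 1)

theorem divergence_smul {c : (ι → ℝ) → ℝ} {F : (ι → ℝ) → ι → ℝ} {x : ι → ℝ}
    (hc : DifferentiableAt ℝ c x) (hF : DifferentiableAt ℝ F x) :
    divergence (fun y => c y • F y) x = fderiv ℝ c x (F x) + c x * divergence F x := by
  have hcoord : ∀ j, fderiv ℝ (fun y => (c y • F y) j) x (Pi.single j 1)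
      = c x * fderiv ℝ (fun y => F y j) x (Pi.single j 1) + F x j * fderiv ℝ c x (Pi.single j 1) :=
    fun j => by
      simp only [Pi.smul_apply, smul_eq_mul]
      rw [fderiv_fun_mul hc (differentiableAt_pi.1 hF j)]
      simp
  have hexpand : fderiv ℝ c x (F x) = ∑ j, F x j * fderiv ℝ c x (Pi.single j 1) := by
    conv_lhs => rw [← Finset.univ_sum_single (F x)]
    refine (map_sum _ _ _).trans (Finset.sum_congr rfl fun j _ => ?_)
    rw [← smul_eq_mul, ← map_smul, ← Pi.single_smul', smul_eq_mul, mul_one]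
  simp only [divergence, hcoord, Finset.sum_add_distrib, ← Finset.mul_sum, hexpand]
  ring

theorem divergence_eq_zero_of_notMem_tsupport {F : (ι → ℝ) → ι → ℝ} {x : ι → ℝ}
    (hx : x ∉ tsupport F) : divergence F x = 0 :=
  Finset.sum_eq_zero fun j _ => by
    rw [fderiv_of_notMem_tsupport ℝ (f := fun y => F y j)
      fun h => hx (tsupport_comp_subset (g := fun v : ι → ℝ => v j) rfl F h)]
    rfl

theorem integral_divergence_eq_zero {F : (ι → ℝ) → ι → ℝ} (hF : ContDiff ℝ 1 F)
    (hFc : HasCompactSupport F) : ∫ x, divergence F x = 0 := by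
  have hcoord : ∀ j, ContDiff ℝ 1 (fun y => F y j) := contDiff_pi.1 hF
  have hcoordc : ∀ j, HasCompactSupport (fun y => F y j) := fun j =>
    hFc.comp_left (g := fun v : ι → ℝ => v j) rfl
  have hint : ∀ j, Integrable (fun x => fderiv ℝ (fun y => F y j) x (Pi.single j 1)) := fun j =>
    ((hcoord j).continuous_fderiv one_ne_zero).clm_apply continuous_const
      |>.integrable_of_hasCompactSupport ((hcoordc j).fderiv_apply ℝ _)
  unfold divergence
  rw [integral_finsetSum _ fun j _ => hint j]
  refine Finset.sum_eq_zero fun j _ => ?_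
  have := integral_mul_fderiv_eq_neg_fderiv_mul_of_integrable (f := fun _ => (1 : ℝ))
    (g := fun y => F y j) (v := Pi.single j 1) (μ := volume) (by simp) (by simpa using hint j)
    (by simpa using (hcoord j).continuous.integrable_of_hasCompactSupport (hcoordc j))
    (fun _ _ => differentiableAt_const _)
    (fun x _ => (hcoord j).differentiable one_ne_zero x)
  simpa using this

theorem setIntegral_fderiv_mul_add_mul_fderiv_eq_zero {Ω : Set (ι → ℝ)} (hΩ : IsOpen Ω)
    {u φ : (ι → ℝ) → ℝ} {F : (ι → ℝ) → ι → ℝ} (hu : ContDiffOn ℝ 1 u Ω) (hφ : ContDiff ℝ 1 φ)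
    (hφc : HasCompactSupport φ) (hφΩ : tsupport φ ⊆ Ω) (hF : ContDiff ℝ 1 F)
    (hdivF : ∀ x ∈ Ω, divergence F x = 0) :
    ∫ x in Ω, (fderiv ℝ u x (F x) * φ x + u x * fderiv ℝ φ x (F x)) = 0 := by
  set W : (ι → ℝ) → ι → ℝ := fun x => (u x * φ x) • F x
  have hWφ : tsupport W ⊆ tsupport φ :=
    (tsupport_smul_subset_left _ _).trans tsupport_mul_subset_right
  have hW : ContDiff ℝ 1 W :=
    ((hu.mul hφ.contDiffOn).smul hF.contDiffOn).contDiff_of_tsupport_subset hΩ (hWφ.trans hφΩ)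
  have hdivW : ∀ x, divergence W x
      = Ω.indicator (fun x => fderiv ℝ u x (F x) * φ x + u x * fderiv ℝ φ x (F x)) x := by
    intro x
    by_cases hx : x ∈ Ω
    · have hux : DifferentiableAt ℝ u x :=
        (hu.contDiffAt (hΩ.mem_nhds hx)).differentiableAt one_ne_zero
      have hφx : DifferentiableAt ℝ φ x := hφ.differentiable one_ne_zero x
      rw [Set.indicator_of_mem hx]
      calc divergence W x
          = fderiv ℝ (fun y => u y * φ y) x (F x) + u x * φ x * divergence F x :=
            divergence_smul (hux.mul hφx) (hF.differentiable one_ne_zero x)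
        _ = fderiv ℝ u x (F x) * φ x + u x * fderiv ℝ φ x (F x) := by
            rw [hdivF x hx, fderiv_fun_mul hux hφx]
            simp only [add_apply, smul_apply, smul_eq_mul]
            ring
    · rw [Set.indicator_of_notMem hx,
        divergence_eq_zero_of_notMem_tsupport fun h => hx (hφΩ (hWφ h))]
  rw [← integral_indicator hΩ.measurableSet, ← integral_divergence_eq_zero hW
    (hφc.mono' ((subset_tsupport W).trans hWφ))]
  exact integral_congr_ae (Filter.Eventually.of_forall fun x => (hdivW x).symm)

theorem setIntegral_sum_fderiv_sub_mul_le_of_le {κ : Type*} [Fintype κ] {Ω : Set (ι → ℝ)}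
    (hΩ : IsOpen Ω) {u : κ → (ι → ℝ) → ℝ} {F : κ → (ι → ℝ) → ι → ℝ} {φ H L : (ι → ℝ) → ℝ}
    (hu : ∀ k, ContDiffOn ℝ 1 (u k) Ω) (hF : ∀ k, ContDiff ℝ 1 (F k))
    (hdivF : ∀ k, ∀ x ∈ Ω, divergence (F k) x = 0) (hφ : ContDiff ℝ 1 φ)
    (hφc : HasCompactSupport φ) (hφΩ : tsupport φ ⊆ Ω) (hH : ContinuousOn H Ω)
    (hL : IntegrableOn L Ω)
    (hle : ∀ x ∈ Ω, -(∑ k, u k x * fderiv ℝ φ x (F k x)) - H x * φ x ≤ L x) :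
    ∫ x in Ω, (∑ k, fderiv ℝ (u k) x (F k x) - H x) * φ x ≤ ∫ x in Ω, L x := by
  have hint {h : (ι → ℝ) → ℝ} (hh : ContinuousOn h Ω)
      (h0 : ∀ x, φ x = 0 → fderiv ℝ φ x = 0 → h x = 0) : IntegrableOn h Ω :=
    hh.integrableOn_of_eq_zero_off_isCompact hΩ.measurableSet hφc hφΩ fun x hx =>
      h0 x (image_eq_zero_of_notMem_tsupport hx) (fderiv_of_notMem_tsupport ℝ hx)
  have hXφ : ∀ k, ContinuousOn (fun x => fderiv ℝ φ x (F k x)) Ω := fun k =>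
    ((hφ.continuous_fderiv one_ne_zero).clm_apply (hF k).continuous).continuousOn
  have hD : ∀ k, IntegrableOn
      (fun x => fderiv ℝ (u k) x (F k x) * φ x + u k x * fderiv ℝ φ x (F k x)) Ω := fun k =>
    hint ((((hu k).continuousOn_fderiv_of_isOpen hΩ le_rfl).clm_apply
      (hF k).continuous.continuousOn).mul hφ.continuous.continuousOn
        |>.add ((hu k).continuousOn.mul (hXφ k)))
      fun x hφx hDφx => by simp [hφx, hDφx]
  have hR : IntegrableOn (fun x => -(∑ k, u k x * fderiv ℝ φ x (F k x)) - H x * φ x) Ω :=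
    hint ((continuousOn_finsetSum _ fun k _ => (hu k).continuousOn.mul (hXφ k)).neg.sub
      (hH.mul hφ.continuous.continuousOn))
      fun x hφx hDφx => by simp [hφx, hDφx]
  calc ∫ x in Ω, (∑ k, fderiv ℝ (u k) x (F k x) - H x) * φ x
      = ∫ x in Ω, ((-(∑ k, u k x * fderiv ℝ φ x (F k x)) - H x * φ x)
          + ∑ k, (fderiv ℝ (u k) x (F k x) * φ x + u k x * fderiv ℝ φ x (F k x))) := by
        refine integral_congr_ae (Filter.Eventually.of_forall fun x => ?_)
        simp only [Finset.sum_add_distrib, ← Finset.sum_mul]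
        ring
    _ = ∫ x in Ω, (-(∑ k, u k x * fderiv ℝ φ x (F k x)) - H x * φ x) := by
        rw [integral_add hR (integrable_finsetSum _ fun k _ => hD k),
          integral_finsetSum _ fun k _ => hD k, Finset.sum_eq_zero fun k _ =>
            setIntegral_fderiv_mul_add_mul_fderiv_eq_zero hΩ (hu k) hφ hφc hφΩ (hF k) (hdivF k),
          add_zero]
    _ ≤ ∫ x in Ω, L x := setIntegral_mono_on hR hL hΩ.measurableSet hle

end Divergence

/-- the divergence-type inequality
`∫_Ω |∇_X f|^p ≥ ∫_Ω ( ∑ₖ Xₖ gₖ − (p−1)|g|^{p/(p−1)} ) |f|^p`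
for vector fields `Xₖ u = aₖ · ∇u` with divergence-free smooth coefficients `aₖ`. -/
theorem stmt_0 {n N : ℕ} (Ω : Set (Fin n → ℝ)) (hΩ : IsOpen Ω)
    (a : Fin N → (Fin n → ℝ) → (Fin n → ℝ))
    (ha : ∀ k, ContDiff ℝ (⊤ : ℕ∞) (a k))
    (hdiv : ∀ k x, ∑ j, fderiv ℝ (fun y => a k y j) x (Pi.single j 1) = 0)
    (p : ℝ) (hp : 1 < p)
    (g : Fin N → (Fin n → ℝ) → ℝ)
    (hg : ∀ k, ContDiffOn ℝ (⊤ : ℕ∞) (g k) Ω)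
    (f : (Fin n → ℝ) → ℝ)
    (hf : ContDiff ℝ (⊤ : ℕ∞) f) (hfc : HasCompactSupport f)
    (hfs : tsupport f ⊆ Ω) :
    ∫ x in Ω, (∑ k, (fderiv ℝ f x (a k x)) ^ 2) ^ (p / 2) ≥
      ∫ x in Ω,
        ((∑ k, fderiv ℝ (g k) x (a k x))
          - (p - 1) * (∑ k, (g k x) ^ 2) ^ (p / (2 * (p - 1)))) * |f x| ^ p := by
  have hf1 : ContDiff ℝ 1 f := hf.of_le (by exact_mod_cast le_top)
  have hp0 : p ≠ 0 := by linarith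
  have hφf : Function.support (fun x => |f x| ^ p) = Function.support f := by
    ext x; simp [hp0]
  refine setIntegral_sum_fderiv_sub_mul_le_of_le hΩ
    (fun k => (hg k).of_le (by exact_mod_cast le_top))
    (fun k => (ha k).of_le (by exact_mod_cast le_top)) (fun k x _ => hdiv k x)
    (hf1.abs_rpow hp) (hfc.mono' (hφf ▸ subset_tsupport f)) (by rw [tsupport, hφf]; exact hfs)
    ?_ ?_ fun x _ => ?_
  · exact continuousOn_const.mul
      ((continuousOn_finsetSum _ fun k _ => (hg k).continuousOn.pow 2).rpow_const
        fun x _ => Or.inr (div_nonneg (by linarith) (by linarith)))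
  · refine ContinuousOn.integrableOn_of_eq_zero_off_isCompact ?_ hΩ.measurableSet hfc hfs
      fun x hx => by simp [fderiv_of_notMem_tsupport ℝ hx, hp0]
    exact ((continuous_finsetSum _ fun k _ =>
      ((hf1.continuous_fderiv one_ne_zero).clm_apply (ha k).continuous).pow 2).rpow_const
        fun x => Or.inr (by positivity)).continuousOn
  · have hsum : ∑ k, g k x * fderiv ℝ (fun y => |f y| ^ p) x (a k x)
        = p * |f x| ^ (p - 2) * f x * ∑ k, g k x * fderiv ℝ f x (a k x) := by
      simp only [fderiv_abs_rpow_apply (hf1.differentiable one_ne_zero x) hp, Finset.mul_sum]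
      exact Finset.sum_congr rfl fun k _ => by ring
    rw [hsum]
    exact neg_mul_sum_mul_sub_le hp (g · x) (fun k => fderiv ℝ f x (a k x)) (f x)
end

section
/- On ℝ³ with the Heisenberg horizontal gradient ∇_H f = (X₁f, X₂f), where X₁f(x) = ∂f/∂x₁ + 2x₂ ∂f/∂x₃ and X₂f(x) = ∂f/∂x₂ − 2x₁ ∂f/∂x₃, let n = (n₁,n₂,n₃) ∈ ℝ³ be a unit vector and let Ω ⊆ {x ∈ ℝ³ : x₁n₁ + x₂n₂ + 2x₃n₃ > 0} be an open set. Then for every p > 1 and every f ∈ C₀^∞(Ω): ∫_Ω |∇_H f(x)|^p dx ≥ ((p−1)/p)^p ∫_Ω ( ((n₁ + 4x₂n₃)² + (n₂ − 4x₁n₃)²)^{p/2} / |x₁n₁ + x₂n₂ + 2x₃n₃|^p ) |f(x)|^p dx. -/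
/-!
Let `d = ⟨Z, n⟩` and `q = |∇_H d|²`. Two identities make `d` behave like a distance function:
`X₁X₁d + X₂X₂d = 0` and `⟨∇_H d, ∇_H q⟩ = 0`. Hence the horizontal field
`W = q^((p-2)/2) d^(1-p) ∇_H d` has `div_H W = -(p-1) q^(p/2) d^(-p)` on `Ω`, and integrating
`div_H (|f|^p W) = 0` gives
`(p-1) ∫ q^(p/2) d^(-p) |f|^p = ∫ p |f|^(p-2) f q^((p-2)/2) d^(1-p) ⟨∇_H d, ∇_H f⟩`.
With `I = ∫ q^(p/2) d^(-p) |f|^p` and `J = ∫ |∇_H f|^p`, Cauchy–Schwarz and Hölder bound the right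
side by `p I^((p-1)/p) J^(1/p)`, which rearranges to `((p-1)/p)^p I ≤ J`. For `p < 2` the weight
`q^((p-2)/2)` is singular where `∇_H d = 0`, so the identity is first proved with `q + ε` in place
of `q`, and `ε → 0` by dominated convergence.
-/

open MeasureTheory Real

/-- The Heisenberg vector field `X₁ f = ∂f/∂x₁ + 2x₂ ∂f/∂x₃` on `ℝ³`. -/
noncomputable def X1H (f : (Fin 3 → ℝ) → ℝ) (x : Fin 3 → ℝ) : ℝ :=
  fderiv ℝ f x ![1, 0, 2 * x 1]

/-- The Heisenberg vector field `X₂ f = ∂f/∂x₂ − 2x₁ ∂f/∂x₃` on `ℝ³`. -/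
noncomputable def X2H (f : (Fin 3 → ℝ) → ℝ) (x : Fin 3 → ℝ) : ℝ :=
  fderiv ℝ f x ![0, 1, -2 * x 0]

open Filter Topology

theorem tsupport_subset_of_forall_notMem {α : Type*} [TopologicalSpace α] {f g : α → ℝ}
    (h : ∀ x ∉ tsupport g, f x = 0) : tsupport f ⊆ tsupport g :=
  closure_minimal (fun x hx => by_contra fun h' => hx (h x h')) (isClosed_tsupport g)

theorem HasCompactSupport.of_tsupport_subset {α : Type*} [TopologicalSpace α] {f g : α → ℝ}
    (hg : HasCompactSupport g) (h : tsupport f ⊆ tsupport g) : HasCompactSupport f :=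
  IsCompact.of_isClosed_subset hg (isClosed_tsupport f) h

section Scalar

variable {p q d u : ℝ}

theorem rpow_add_mul_le {ε s t K : ℝ} (hq : 0 ≤ q) (hε : 0 < ε) (hε1 : ε ≤ 1) (ht : 0 ≤ t)
    (hst : 0 ≤ s + t) (hK : 0 ≤ K) : (q + ε) ^ s * (q ^ t * K) ≤ (q + 1) ^ (s + t) * K := by
  have hqε : 0 < q + ε := by linarith
  calc (q + ε) ^ s * (q ^ t * K) ≤ (q + ε) ^ s * ((q + ε) ^ t * K) := by
        gcongr; linarith
    _ = (q + ε) ^ (s + t) * K := by rw [rpow_add hqε, mul_assoc]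
    _ ≤ (q + 1) ^ (s + t) * K := by gcongr

theorem le_of_mul_le_mul_rpow {I J : ℝ} (hp : 1 < p) (hI : 0 ≤ I) (hJ : 0 ≤ J)
    (h : (p - 1) * I ≤ p * (I ^ ((p - 1) / p) * J ^ (1 / p))) :
    ((p - 1) / p) ^ p * I ≤ J := by
  have hp0 : 0 < p := by linarith
  rcases hI.eq_or_lt with rfl | hI
  · simpa using hJ
  have hsplit : I = I ^ ((p - 1) / p) * I ^ (1 / p) := by
    rw [← rpow_add hI, show (p - 1) / p + 1 / p = 1 by field_simp; ring, rpow_one]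
  have hroot : (p - 1) / p * I ^ (1 / p) ≤ J ^ (1 / p) := by
    rw [div_mul_eq_mul_div, div_le_iff₀ hp0]
    refine le_of_mul_le_mul_left ?_ (rpow_pos_of_pos hI ((p - 1) / p))
    nth_rewrite 1 [hsplit] at h
    linarith
  calc ((p - 1) / p) ^ p * I = ((p - 1) / p * I ^ (1 / p)) ^ p := by
        rw [mul_rpow (by bound) (by positivity), ← rpow_mul hI.le, one_div_mul_cancel hp0.ne',
          rpow_one]
    _ ≤ (J ^ (1 / p)) ^ p := rpow_le_rpow (by bound) hroot hp0.le
    _ = J := by rw [← rpow_mul hJ, one_div_mul_cancel hp0.ne', rpow_one]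

theorem abs_mul_abs_rpow_sub_two_mul_self (hp : 1 < p) :
    |p * |u| ^ (p - 2) * u| = p * |u| ^ (p - 1) := by
  rw [abs_mul, abs_mul, abs_of_pos (by linarith : 0 < p),
    abs_of_nonneg (rpow_nonneg (abs_nonneg u) _), mul_assoc,
    ← rpow_add_one' (abs_nonneg u) (by linarith)]
  ring_nf

theorem sqrt_mul_abs_div_rpow (hq : 0 ≤ q) :
    (√q * |u| / |d|) ^ p = q ^ (p / 2) / |d| ^ p * |u| ^ p := by
  rw [div_rpow (by positivity) (abs_nonneg d), mul_rpow (sqrt_nonneg q) (abs_nonneg u),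
    sqrt_eq_rpow, ← rpow_mul hq, one_div_mul_eq_div]
  ring

theorem hardy_weight_eq (hp : p ≠ 0) (hq : 0 ≤ q) (hd : 0 < d) :
    q ^ ((p - 2) / 2) * (d ^ (-p) * (q * |u| ^ p)) = (√q * |u| / |d|) ^ p := by
  rw [sqrt_mul_abs_div_rpow hq, abs_of_pos hd, rpow_neg hd.le]
  have : q ^ ((p - 2) / 2) * q = q ^ (p / 2) := by
    rw [← rpow_add_one' hq (by contrapose! hp; linarith)]; ring_nf
  rw [← this]
  field_simp

theorem hardy_flux_le (hp : 1 < p) (hq : 0 ≤ q) (hd : 0 < d)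
    {c w : ℝ} (hc : |c| ≤ √q * w) :
    q ^ ((p - 2) / 2) * (d ^ (1 - p) * (p * |u| ^ (p - 2) * u * c)) ≤
      p * ((√q * |u| / |d|) ^ (p - 1) * w) := by
  have hsq : q ^ ((p - 2) / 2) * √q = √q ^ (p - 1) := by
    rw [sqrt_eq_rpow, ← rpow_mul hq, ← rpow_add' hq (by linarith)]; ring_nf
  have hs : 0 ≤ q ^ ((p - 2) / 2) := rpow_nonneg hq _
  have hd' : 0 ≤ d ^ (1 - p) := rpow_nonneg hd.le _
  calc q ^ ((p - 2) / 2) * (d ^ (1 - p) * (p * |u| ^ (p - 2) * u * c))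
      ≤ q ^ ((p - 2) / 2) * (d ^ (1 - p) * (p * |u| ^ (p - 1) * |c|)) := by
        refine (le_abs_self _).trans_eq ?_
        rw [abs_mul, abs_mul, abs_mul, abs_of_nonneg hs, abs_of_nonneg hd',
          abs_mul_abs_rpow_sub_two_mul_self hp]
    _ ≤ q ^ ((p - 2) / 2) * (d ^ (1 - p) * (p * |u| ^ (p - 1) * (√q * w))) := by
        gcongr
    _ = p * ((√q * |u| / |d|) ^ (p - 1) * w) := by
        rw [abs_of_pos hd, div_rpow (by positivity) hd.le, mul_rpow (sqrt_nonneg q) (abs_nonneg u),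
          ← hsq, show 1 - p = -(p - 1) by ring, rpow_neg hd.le]
        field_simp

end Scalar

section Calculus

variable {E : Type*} [NormedAddCommGroup E] [NormedSpace ℝ E]

theorem contDiff_of_forall_mem_tsupport {n : WithTop ℕ∞} {f : E → ℝ}
    (hf : ∀ x ∈ tsupport f, ContDiffAt ℝ n f x) : ContDiff ℝ n f :=
  contDiff_iff_contDiffAt.2 fun x => (em _).elim (hf x) fun hx =>
    contDiffAt_const.congr_of_eventuallyEq (notMem_tsupport_iff_eventuallyEq.mp hx)

theorem fderiv_mul_apply {c g : E → ℝ} {x : E} (hc : DifferentiableAt ℝ c x)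
    (hg : DifferentiableAt ℝ g x) (v : E) :
    fderiv ℝ (fun y => c y * g y) x v = c x * fderiv ℝ g x v + g x * fderiv ℝ c x v := by
  simp [fderiv_fun_mul hc hg]

theorem fderiv_comp_apply_of_real {ψ : ℝ → ℝ} {g : E → ℝ} {x : E}
    (hψ : DifferentiableAt ℝ ψ (g x)) (hg : DifferentiableAt ℝ g x) (v : E) :
    fderiv ℝ (fun y => ψ (g y)) x v = deriv ψ (g x) * fderiv ℝ g x v := by
  rw [show (fun y => ψ (g y)) = ψ ∘ g from rfl,
    (hψ.hasDerivAt.comp_hasFDerivAt x hg.hasFDerivAt).fderiv]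
  simp

variable [FiniteDimensional ℝ E] [MeasurableSpace E] [BorelSpace E]
  {μ : Measure E} [μ.IsAddHaarMeasure]

theorem integral_mul_fderiv_eq_zero {c F : E → ℝ} {v : E} (hc : Differentiable ℝ c)
    (hcv : ∀ x, fderiv ℝ c x v = 0) (hF : ContDiff ℝ 1 F) (hFc : HasCompactSupport F) :
    ∫ x, c x * fderiv ℝ F x v ∂μ = 0 := by
  have hF' : Continuous fun x => fderiv ℝ F x v :=
    (hF.continuous_fderiv one_ne_zero).clm_apply continuous_const
  rw [integral_mul_fderiv_eq_neg_fderiv_mul_of_integrable (by simp [hcv])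
    ((hc.continuous.mul hF').integrable_of_hasCompactSupport (hFc.fderiv_apply ℝ v).mul_left)
    ((hc.continuous.mul hF.continuous).integrable_of_hasCompactSupport hFc.mul_left)
    (fun x _ => hc x) (fun x _ => hF.differentiable one_ne_zero x)]
  simp [hcv]

theorem integral_fderiv_add_mul_fderiv_eq_zero {c F : E → ℝ} {v w : E} (hc : Differentiable ℝ c)
    (hcw : ∀ x, fderiv ℝ c x w = 0) (hF : ContDiff ℝ 1 F) (hFc : HasCompactSupport F) :
    ∫ x, (fderiv ℝ F x v + c x * fderiv ℝ F x w) ∂μ = 0 := by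
  have hF' : ∀ u, Continuous fun x => fderiv ℝ F x u := fun u =>
    (hF.continuous_fderiv one_ne_zero).clm_apply continuous_const
  have hv := integral_mul_fderiv_eq_zero (μ := μ) (c := fun _ => 1) (v := v)
    (differentiable_const _) (by simp) hF hFc
  simp only [one_mul] at hv
  have hcF : Integrable (fun x => c x * fderiv ℝ F x w) μ :=
    (hc.continuous.mul (hF' w)).integrable_of_hasCompactSupport (hFc.fderiv_apply ℝ w).mul_left
  rw [integral_add ((hF' v).integrable_of_hasCompactSupport (hFc.fderiv_apply ℝ v)) hcF,
    hv, integral_mul_fderiv_eq_zero hc hcw hF hFc, add_zero]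

end Calculus

theorem integral_mono_of_nonneg_right {X : Type*} [MeasurableSpace X] {μ : Measure X}
    {f g : X → ℝ} (hg : Integrable g μ) (hg0 : 0 ≤ g)
    (hfg : f ≤ g) : ∫ x, f x ∂μ ≤ ∫ x, g x ∂μ := by
  by_cases hf : Integrable f μ
  · exact integral_mono hf hg hfg
  · exact integral_undef hf ▸ integral_nonneg hg0

section Integrals

variable {X : Type*} [TopologicalSpace X] [MeasurableSpace X] [OpensMeasurableSpace X]
  {μ : Measure X} [IsFiniteMeasureOnCompacts μ]

theorem tendsto_integral_rpow_add_mul {q F K : X → ℝ} {s t : ℝ} (hq : Continuous q)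
    (hq0 : ∀ x, 0 ≤ q x) (hF : Continuous F) (hK : Continuous K) (hKc : HasCompactSupport K)
    (hK0 : ∀ x, 0 ≤ K x) (hFK : ∀ x, |F x| ≤ q x ^ t * K x) (ht : 0 < t) (hst : 0 ≤ s + t) :
    Tendsto (fun ε => ∫ x, (q x + ε) ^ s * F x ∂μ) (𝓝[>] 0) (𝓝 (∫ x, q x ^ s * F x ∂μ)) := by
  refine tendsto_integral_filter_of_dominated_convergence
    (fun x => (q x + 1) ^ (s + t) * K x) ?_ ?_ ?_ (.of_forall fun x => ?_)
  · filter_upwards [self_mem_nhdsWithin] with ε (hε : 0 < ε)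
    refine (((hq.add continuous_const).rpow_const fun x => ?_).mul hF).aestronglyMeasurable
    exact Or.inl (by simp only [Pi.add_apply]; linarith [hq0 x])
  · filter_upwards [Ioc_mem_nhdsGT one_pos] with ε ⟨hε, hε1⟩
    refine .of_forall fun x => ?_
    rw [norm_eq_abs, abs_mul, abs_of_nonneg (rpow_nonneg (by linarith [hq0 x]) _)]
    exact (mul_le_mul_of_nonneg_left (hFK x) (rpow_nonneg (by linarith [hq0 x]) _)).trans
      (rpow_add_mul_le (hq0 x) hε hε1 ht.le hst (hK0 x))
  · exact (((hq.add continuous_const).rpow_const fun x => Or.inr hst).mul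
      hK).integrable_of_hasCompactSupport hKc.mul_left
  · rcases (hq0 x).eq_or_lt with hqx | hqx
    · have : F x = 0 := by simpa [← hqx, zero_rpow ht.ne'] using hFK x
      simp [this]
    · have : ContinuousAt (fun ε => (q x + ε) ^ s) 0 :=
        (continuousAt_const.add continuousAt_id).rpow_const (Or.inl (by simpa using hqx.ne'))
      simpa using (this.tendsto.mono_left nhdsWithin_le_nhds).mul_const (F x)

theorem integral_rpow_le_of_le_integral_rpow_sub_one_mul {p : ℝ} (hp : 1 < p) {g V : X → ℝ}
    (hg : Continuous g) (hgc : HasCompactSupport g) (hg0 : ∀ x, 0 ≤ g x)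
    (hV : Continuous V) (hVc : HasCompactSupport V) (hV0 : ∀ x, 0 ≤ V x)
    (h : (p - 1) * ∫ x, g x ^ p ∂μ ≤ p * ∫ x, g x ^ (p - 1) * V x ∂μ) :
    ((p - 1) / p) ^ p * ∫ x, g x ^ p ∂μ ≤ ∫ x, V x ^ p ∂μ := by
  have hp0 : 0 < p := by linarith
  have hp1 : 0 < p - 1 := by linarith
  have hconj : (p / (p - 1)).HolderConjugate p :=
    ((holderConjugate_iff_eq_conjExponent hp).2 rfl).symm
  have hgp : Continuous fun x => g x ^ (p - 1) := hg.rpow_const fun x => Or.inr hp1.le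
  have holder := integral_mul_le_Lp_mul_Lq_of_nonneg hconj
    (.of_forall fun x => rpow_nonneg (hg0 x) _) (.of_forall hV0)
    (hgp.memLp_of_hasCompactSupport (μ := μ) (hgc.rpow_const hp1.ne'))
    (hV.memLp_of_hasCompactSupport (μ := μ) hVc)
  have hpow : ∀ x, (g x ^ (p - 1)) ^ (p / (p - 1)) = g x ^ p := fun x => by
    rw [← rpow_mul (hg0 x), mul_div_cancel₀ _ hp1.ne']
  simp only [hpow, one_div_div] at holder
  exact le_of_mul_le_mul_rpow hp (integral_nonneg fun x => rpow_nonneg (hg0 x) _)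
    (integral_nonneg fun x => rpow_nonneg (hV0 x) _)
    (h.trans (mul_le_mul_of_nonneg_left holder hp0.le))

end Integrals

local notation "ℝ³" => Fin 3 → ℝ

section HorizontalFields

theorem X1H_eq (f : ℝ³ → ℝ) (x : ℝ³) :
    X1H f x = fderiv ℝ f x (Pi.single 0 1) + 2 * x 1 * fderiv ℝ f x (Pi.single 2 1) := by
  have hv : (![1, 0, 2 * x 1] : ℝ³) = Pi.single 0 1 + (2 * x 1) • Pi.single 2 1 := by
    ext i; fin_cases i <;> simp
  rw [X1H, hv, map_add, map_smul, smul_eq_mul]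

theorem X2H_eq (f : ℝ³ → ℝ) (x : ℝ³) :
    X2H f x = fderiv ℝ f x (Pi.single 1 1) + -2 * x 0 * fderiv ℝ f x (Pi.single 2 1) := by
  have hv : (![0, 1, -2 * x 0] : ℝ³) = Pi.single 1 1 + (-2 * x 0) • Pi.single 2 1 := by
    ext i; fin_cases i <;> simp
  rw [X2H, hv, map_add, map_smul, smul_eq_mul]

noncomputable def hgradNorm (f : ℝ³ → ℝ) (x : ℝ³) : ℝ := √(X1H f x ^ 2 + X2H f x ^ 2)

variable {f g : ℝ³ → ℝ} {x : ℝ³}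

theorem X1H_mul (hf : DifferentiableAt ℝ f x) (hg : DifferentiableAt ℝ g x) :
    X1H (fun y => f y * g y) x = f x * X1H g x + g x * X1H f x :=
  fderiv_mul_apply hf hg _

theorem X2H_mul (hf : DifferentiableAt ℝ f x) (hg : DifferentiableAt ℝ g x) :
    X2H (fun y => f y * g y) x = f x * X2H g x + g x * X2H f x :=
  fderiv_mul_apply hf hg _

theorem X1H_comp {ψ : ℝ → ℝ} (hψ : DifferentiableAt ℝ ψ (g x)) (hg : DifferentiableAt ℝ g x) :
    X1H (fun y => ψ (g y)) x = deriv ψ (g x) * X1H g x :=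
  fderiv_comp_apply_of_real hψ hg _

theorem X2H_comp {ψ : ℝ → ℝ} (hψ : DifferentiableAt ℝ ψ (g x)) (hg : DifferentiableAt ℝ g x) :
    X2H (fun y => ψ (g y)) x = deriv ψ (g x) * X2H g x :=
  fderiv_comp_apply_of_real hψ hg _

theorem X1H_of_notMem_tsupport (hx : x ∉ tsupport f) : X1H f x = 0 := by
  simp [X1H, fderiv_of_notMem_tsupport ℝ hx]

theorem X2H_of_notMem_tsupport (hx : x ∉ tsupport f) : X2H f x = 0 := by
  simp [X2H, fderiv_of_notMem_tsupport ℝ hx]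

theorem tsupport_X1H_subset : tsupport (X1H f) ⊆ tsupport f :=
  tsupport_subset_of_forall_notMem fun _ => X1H_of_notMem_tsupport

theorem tsupport_X2H_subset : tsupport (X2H f) ⊆ tsupport f :=
  tsupport_subset_of_forall_notMem fun _ => X2H_of_notMem_tsupport

theorem continuous_X1H (hf : ContDiff ℝ 1 f) : Continuous (X1H f) :=
  (hf.continuous_fderiv one_ne_zero).clm_apply (by fun_prop)

theorem continuous_X2H (hf : ContDiff ℝ 1 f) : Continuous (X2H f) :=
  (hf.continuous_fderiv one_ne_zero).clm_apply (by fun_prop)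

theorem hgradNorm_nonneg : 0 ≤ hgradNorm f x := sqrt_nonneg _

theorem continuous_hgradNorm (hf : ContDiff ℝ 1 f) : Continuous (hgradNorm f) :=
  (((continuous_X1H hf).pow 2).add ((continuous_X2H hf).pow 2)).sqrt

theorem tsupport_hgradNorm_subset : tsupport (hgradNorm f) ⊆ tsupport f :=
  tsupport_subset_of_forall_notMem fun _ hx => by
    simp [hgradNorm, X1H_of_notMem_tsupport hx, X2H_of_notMem_tsupport hx]

theorem integral_X1H_eq_zero (hf : ContDiff ℝ 1 f) (hfc : HasCompactSupport f) :
    ∫ x, X1H f x = 0 := by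
  simp_rw [X1H_eq]
  exact integral_fderiv_add_mul_fderiv_eq_zero (by fun_prop)
    (fun x => by simp (disch := fun_prop) [fderiv_const_mul, fderiv_apply, Pi.single_apply]) hf hfc

theorem integral_X2H_eq_zero (hf : ContDiff ℝ 1 f) (hfc : HasCompactSupport f) :
    ∫ x, X2H f x = 0 := by
  simp_rw [X2H_eq]
  exact integral_fderiv_add_mul_fderiv_eq_zero (by fun_prop)
    (fun x => by simp (disch := fun_prop) [fderiv_const_mul, fderiv_apply, Pi.single_apply]) hf hfc

end HorizontalFields

section InnerZ

variable (n : ℝ³)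

def innerZ (x : ℝ³) : ℝ := x 0 * n 0 + x 1 * n 1 + 2 * x 2 * n 2

def hgrad₁ (x : ℝ³) : ℝ := n 0 + 4 * x 1 * n 2

def hgrad₂ (x : ℝ³) : ℝ := n 1 - 4 * x 0 * n 2

def hgradSq (x : ℝ³) : ℝ := hgrad₁ n x ^ 2 + hgrad₂ n x ^ 2

noncomputable def hgradDot (f : ℝ³ → ℝ) (x : ℝ³) : ℝ := hgrad₁ n x * X1H f x + hgrad₂ n x * X2H f x

@[fun_prop] theorem contDiff_innerZ : ContDiff ℝ 1 (innerZ n) := by unfold innerZ; fun_prop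

@[fun_prop] theorem contDiff_hgrad₁ : ContDiff ℝ 1 (hgrad₁ n) := by unfold hgrad₁; fun_prop

@[fun_prop] theorem contDiff_hgrad₂ : ContDiff ℝ 1 (hgrad₂ n) := by unfold hgrad₂; fun_prop

@[fun_prop] theorem contDiff_hgradSq : ContDiff ℝ 1 (hgradSq n) := by unfold hgradSq; fun_prop

variable {n} (x : ℝ³)

theorem hgradSq_nonneg : 0 ≤ hgradSq n x := by unfold hgradSq; positivity

theorem X1H_innerZ : X1H (innerZ n) x = hgrad₁ n x := by
  unfold X1H innerZ hgrad₁
  simp (disch := fun_prop) [fderiv_fun_add, fderiv_mul_const, fderiv_const_mul, fderiv_apply]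
  ring

theorem X2H_innerZ : X2H (innerZ n) x = hgrad₂ n x := by
  unfold X2H innerZ hgrad₂
  simp (disch := fun_prop) [fderiv_fun_add, fderiv_mul_const, fderiv_const_mul, fderiv_apply]
  ring

theorem X1H_hgrad₁_add_X2H_hgrad₂ : X1H (hgrad₁ n) x + X2H (hgrad₂ n) x = 0 := by
  unfold X1H X2H hgrad₁ hgrad₂
  simp (disch := fun_prop) [fderiv_fun_sub, fderiv_mul_const, fderiv_const_mul, fderiv_apply]

theorem hgrad₁_mul_X1H_hgradSq_add_hgrad₂_mul_X2H_hgradSq :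
    hgrad₁ n x * X1H (hgradSq n) x + hgrad₂ n x * X2H (hgradSq n) x = 0 := by
  unfold X1H X2H hgradSq hgrad₁ hgrad₂
  simp (disch := fun_prop) [fderiv_fun_add, fderiv_fun_sub, fderiv_fun_pow, fderiv_mul_const,
    fderiv_const_mul, fderiv_apply]
  ring

variable {f : ℝ³ → ℝ}

theorem continuous_hgradDot (hf : ContDiff ℝ 1 f) : Continuous (hgradDot n f) :=
  ((contDiff_hgrad₁ n).continuous.mul (continuous_X1H hf)).add
    ((contDiff_hgrad₂ n).continuous.mul (continuous_X2H hf))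

theorem tsupport_hgradDot_subset : tsupport (hgradDot n f) ⊆ tsupport f :=
  tsupport_subset_of_forall_notMem fun _ hx => by
    simp [hgradDot, X1H_of_notMem_tsupport hx, X2H_of_notMem_tsupport hx]

theorem abs_hgradDot_le : |hgradDot n f x| ≤ √(hgradSq n x) * hgradNorm f x := by
  rw [hgradDot, hgradSq, hgradNorm, ← sqrt_mul (by positivity), ← sqrt_sq_eq_abs]
  exact sqrt_le_sqrt (by nlinarith [sq_nonneg (hgrad₁ n x * X2H f x - hgrad₂ n x * X1H f x)])

end InnerZ

theorem X1H_add_X2H_hgradField {n : ℝ³} {ψ r : ℝ → ℝ} {x : ℝ³}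
    (hψ : DifferentiableAt ℝ ψ (hgradSq n x)) (hr : DifferentiableAt ℝ r (innerZ n x)) :
    X1H (fun y => ψ (hgradSq n y) * r (innerZ n y) * hgrad₁ n y) x +
        X2H (fun y => ψ (hgradSq n y) * r (innerZ n y) * hgrad₂ n y) x =
      ψ (hgradSq n x) * deriv r (innerZ n x) * hgradSq n x := by
  have hq : DifferentiableAt ℝ (hgradSq n) x := (contDiff_hgradSq n).differentiable one_ne_zero x
  have hd : DifferentiableAt ℝ (innerZ n) x := (contDiff_innerZ n).differentiable one_ne_zero x
  have ha : DifferentiableAt ℝ (hgrad₁ n) x := (contDiff_hgrad₁ n).differentiable one_ne_zero x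
  have hb : DifferentiableAt ℝ (hgrad₂ n) x := (contDiff_hgrad₂ n).differentiable one_ne_zero x
  have hψq : DifferentiableAt ℝ (fun y => ψ (hgradSq n y)) x := hψ.comp x hq
  have hrd : DifferentiableAt ℝ (fun y => r (innerZ n y)) x := hr.comp x hd
  have hψr : DifferentiableAt ℝ (fun y => ψ (hgradSq n y) * r (innerZ n y)) x := hψq.mul hrd
  rw [X1H_mul hψr ha, X2H_mul hψr hb, X1H_mul hψq hrd, X2H_mul hψq hrd, X1H_comp hψ hq,
    X2H_comp hψ hq, X1H_comp hr hd, X2H_comp hr hd, X1H_innerZ, X2H_innerZ]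
  have hq_eq : hgradSq n x = hgrad₁ n x ^ 2 + hgrad₂ n x ^ 2 := rfl
  linear_combination ψ (hgradSq n x) * r (innerZ n x) * X1H_hgrad₁_add_X2H_hgrad₂ x +
    deriv ψ (hgradSq n x) * r (innerZ n x) *
      hgrad₁_mul_X1H_hgradSq_add_hgrad₂_mul_X2H_hgradSq x -
    ψ (hgradSq n x) * deriv r (innerZ n x) * hq_eq

section HardyIdentity

variable {n : ℝ³} {Ω : Set ℝ³} {p : ℝ} {φ : ℝ³ → ℝ} {ψ : ℝ → ℝ}

theorem continuous_innerZ_rpow_mul (hΩ : IsOpen Ω) (hΩn : ∀ x ∈ Ω, 0 < innerZ n x) (s : ℝ)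
    {Φ : ℝ³ → ℝ} (hΦ : Continuous Φ) (hΦΩ : tsupport Φ ⊆ Ω) :
    Continuous fun x => innerZ n x ^ s * Φ x :=
  ContinuousOn.continuous_of_tsupport_subset
    (((contDiff_innerZ n).continuous.continuousOn.rpow_const fun x hx =>
      Or.inl (hΩn x hx).ne').mul hΦ.continuousOn) hΩ (tsupport_mul_subset_right.trans hΦΩ)

theorem X1H_mul_hgradField_add_X2H_mul_hgradField (hΩn : ∀ x ∈ Ω, 0 < innerZ n x)
    (hφ : Differentiable ℝ φ) (hφΩ : tsupport φ ⊆ Ω) (hψ : ∀ t, 0 ≤ t → DifferentiableAt ℝ ψ t)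
    (x : ℝ³) :
    X1H (fun y => φ y * (ψ (hgradSq n y) * innerZ n y ^ (1 - p) * hgrad₁ n y)) x +
        X2H (fun y => φ y * (ψ (hgradSq n y) * innerZ n y ^ (1 - p) * hgrad₂ n y)) x =
      ψ (hgradSq n x) * (innerZ n x ^ (1 - p) * hgradDot n φ x) -
        (p - 1) * (ψ (hgradSq n x) * (innerZ n x ^ (-p) * (hgradSq n x * φ x))) := by
  by_cases hx : x ∈ tsupport φ
  · have hd := hΩn x (hφΩ hx)
    have hr : DifferentiableAt ℝ (fun t : ℝ => t ^ (1 - p)) (innerZ n x) :=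
      differentiableAt_rpow_const_of_ne _ hd.ne'
    have hq := (contDiff_hgradSq n).differentiable one_ne_zero x
    have hG : ∀ c : ℝ³ → ℝ, DifferentiableAt ℝ c x →
        DifferentiableAt ℝ (fun y => ψ (hgradSq n y) * innerZ n y ^ (1 - p) * c y) x :=
      fun c hc => (((hψ _ (hgradSq_nonneg x)).comp x hq).mul
        (hr.comp x ((contDiff_innerZ n).differentiable one_ne_zero x))).mul hc
    have hdiv := X1H_add_X2H_hgradField (hψ _ (hgradSq_nonneg x)) hr
    rw [Real.deriv_rpow_const, sub_sub_cancel_left] at hdiv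
    rw [X1H_mul (hφ x) (hG _ ((contDiff_hgrad₁ n).differentiable one_ne_zero x)),
      X2H_mul (hφ x) (hG _ ((contDiff_hgrad₂ n).differentiable one_ne_zero x)), hgradDot]
    linear_combination φ x * hdiv
  · have hφG : ∀ G : ℝ³ → ℝ, x ∉ tsupport fun y => φ y * G y := fun G h =>
      hx (tsupport_mul_subset_left h)
    simp [X1H_of_notMem_tsupport (hφG _), X2H_of_notMem_tsupport (hφG _), hgradDot,
      X1H_of_notMem_tsupport hx, X2H_of_notMem_tsupport hx, image_eq_zero_of_notMem_tsupport hx]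

theorem integral_hgradDot_eq (hΩ : IsOpen Ω) (hΩn : ∀ x ∈ Ω, 0 < innerZ n x)
    (hφ : ContDiff ℝ 1 φ) (hφc : HasCompactSupport φ) (hφΩ : tsupport φ ⊆ Ω)
    (hψ : ∀ t, 0 ≤ t → ContDiffAt ℝ 1 ψ t) :
    ∫ x, ψ (hgradSq n x) * (innerZ n x ^ (1 - p) * hgradDot n φ x) =
      (p - 1) * ∫ x, ψ (hgradSq n x) * (innerZ n x ^ (-p) * (hgradSq n x * φ x)) := by
  have hφG : ∀ c : ℝ³ → ℝ, ContDiff ℝ 1 c →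
      ContDiff ℝ 1 fun y => φ y * (ψ (hgradSq n y) * innerZ n y ^ (1 - p) * c y) :=
    fun c hc => contDiff_of_forall_mem_tsupport fun x hx => hφ.contDiffAt.mul
      ((((hψ _ (hgradSq_nonneg x)).comp x (contDiff_hgradSq n).contDiffAt).mul
        ((contDiff_innerZ n).contDiffAt.rpow_const_of_ne
          (hΩn x (hφΩ (tsupport_mul_subset_left hx))).ne')).mul hc.contDiffAt)
  have hdiv := congrArg₂ (· + ·)
    (integral_X1H_eq_zero (hφG _ (contDiff_hgrad₁ n)) hφc.mul_right)
    (integral_X2H_eq_zero (hφG _ (contDiff_hgrad₂ n)) hφc.mul_right)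
  rw [← integral_add
    ((continuous_X1H (hφG _ (contDiff_hgrad₁ n))).integrable_of_hasCompactSupport
      (hφc.mul_right.of_tsupport_subset tsupport_X1H_subset))
    ((continuous_X2H (hφG _ (contDiff_hgrad₂ n))).integrable_of_hasCompactSupport
      (hφc.mul_right.of_tsupport_subset tsupport_X2H_subset))] at hdiv
  simp_rw [X1H_mul_hgradField_add_X2H_mul_hgradField hΩn (hφ.differentiable one_ne_zero) hφΩ
    (fun t ht => (hψ t ht).differentiableAt one_ne_zero)] at hdiv
  have hψq : Continuous fun x => ψ (hgradSq n x) := continuous_iff_continuousAt.2 fun x =>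
    (hψ _ (hgradSq_nonneg x)).continuousAt.comp (contDiff_hgradSq n).continuous.continuousAt
  have hint : ∀ {Φ : ℝ³ → ℝ}, Continuous Φ → HasCompactSupport Φ →
      Integrable fun x => ψ (hgradSq n x) * Φ x := fun hΦ hΦc =>
    (hψq.mul hΦ).integrable_of_hasCompactSupport hΦc.mul_left
  have h₁ := hint (continuous_innerZ_rpow_mul hΩ hΩn (1 - p) (continuous_hgradDot (n := n) hφ)
    ((tsupport_hgradDot_subset (n := n)).trans hφΩ))
    (hφc.of_tsupport_subset (tsupport_hgradDot_subset (n := n))).mul_left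
  have h₀ := hint (continuous_innerZ_rpow_mul hΩ hΩn (-p)
    (Φ := fun x => hgradSq n x * φ x) ((contDiff_hgradSq n).continuous.mul hφ.continuous)
    (tsupport_mul_subset_right.trans hφΩ))
    hφc.mul_left.mul_left
  rw [integral_sub h₁ (h₀.const_mul _), integral_const_mul] at hdiv
  linarith

theorem integral_rpow_hgradDot_eq (hΩ : IsOpen Ω) (hΩn : ∀ x ∈ Ω, 0 < innerZ n x)
    (hp : 1 < p) (hφ : ContDiff ℝ 1 φ) (hφc : HasCompactSupport φ) (hφΩ : tsupport φ ⊆ Ω) :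
    ∫ x, hgradSq n x ^ ((p - 2) / 2) * (innerZ n x ^ (1 - p) * hgradDot n φ x) =
      (p - 1) * ∫ x, hgradSq n x ^ ((p - 2) / 2) * (innerZ n x ^ (-p) * (hgradSq n x * φ x)) := by
  have hq := (contDiff_hgradSq n).continuous
  have hΦ₀ := continuous_innerZ_rpow_mul hΩ hΩn (-p) hφ.continuous hφΩ
  have lim₀ := tendsto_integral_rpow_add_mul (μ := volume) (s := (p - 2) / 2) hq hgradSq_nonneg
    (continuous_innerZ_rpow_mul hΩ hΩn (-p) (Φ := fun x => hgradSq n x * φ x)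
      (hq.mul hφ.continuous) (tsupport_mul_subset_right.trans hφΩ))
    hΦ₀.abs hφc.mul_left.abs (fun x => abs_nonneg _) (fun x => le_of_eq (by
      rw [rpow_one, abs_mul, abs_mul, abs_mul, abs_of_nonneg (hgradSq_nonneg x)]; ring))
    one_pos (by linarith)
  have lim₁ := tendsto_integral_rpow_add_mul (μ := volume) (s := (p - 2) / 2) hq hgradSq_nonneg
    (continuous_innerZ_rpow_mul hΩ hΩn (1 - p) (continuous_hgradDot (n := n) hφ)
      ((tsupport_hgradDot_subset (n := n)).trans hφΩ))
    (continuous_innerZ_rpow_mul hΩ hΩn (1 - p) (continuous_hgradNorm hφ)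
      (tsupport_hgradNorm_subset.trans hφΩ)).abs
    (hφc.of_tsupport_subset tsupport_hgradNorm_subset).mul_left.abs
    (fun x => abs_nonneg _) (fun x => by
      rw [← sqrt_eq_rpow, abs_mul, abs_mul, abs_of_nonneg (hgradNorm_nonneg (f := φ) (x := x))]
      exact (mul_le_mul_of_nonneg_left (abs_hgradDot_le x) (abs_nonneg _)).trans_eq (by ring))
    one_half_pos (by linarith)
  refine tendsto_nhds_unique (lim₁.congr' ?_) (lim₀.const_mul (p - 1))
  filter_upwards [self_mem_nhdsWithin] with ε (hε : 0 < ε)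
  exact integral_hgradDot_eq (ψ := fun t => (t + ε) ^ ((p - 2) / 2)) hΩ hΩn hφ hφc hφΩ
    fun t ht => (contDiffAt_id.add contDiffAt_const).rpow_const_of_ne (by simp; linarith)

end HardyIdentity

theorem hgradDot_abs_rpow {n : ℝ³} {f : ℝ³ → ℝ} {p : ℝ} (hf : Differentiable ℝ f) (hp : 1 < p)
    (x : ℝ³) :
    hgradDot n (fun y => |f y| ^ p) x = p * |f x| ^ (p - 2) * f x * hgradDot n f x := by
  have hψ := hasDerivAt_abs_rpow (f x) hp
  rw [hgradDot, hgradDot, X1H_comp hψ.differentiableAt (hf x),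
    X2H_comp hψ.differentiableAt (hf x), hψ.deriv]
  ring

section HardyRatio

variable {n : ℝ³} {Ω : Set ℝ³} {p : ℝ} {f : ℝ³ → ℝ}

noncomputable def hardyRatio (n : ℝ³) (f : ℝ³ → ℝ) (x : ℝ³) : ℝ :=
  √(hgradSq n x) * |f x| / |innerZ n x|

theorem hardyRatio_nonneg (x : ℝ³) : 0 ≤ hardyRatio n f x := by unfold hardyRatio; positivity

theorem tsupport_hardyRatio_subset : tsupport (hardyRatio n f) ⊆ tsupport f :=
  tsupport_subset_of_forall_notMem fun x hx => by
    simp [hardyRatio, image_eq_zero_of_notMem_tsupport hx]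

theorem continuous_hardyRatio (hΩ : IsOpen Ω) (hΩn : ∀ x ∈ Ω, 0 < innerZ n x)
    (hf : Continuous f) (hfΩ : tsupport f ⊆ Ω) : Continuous (hardyRatio n f) :=
  ContinuousOn.continuous_of_tsupport_subset
    (((contDiff_hgradSq n).continuous.sqrt.mul hf.abs).continuousOn.div
      (contDiff_innerZ n).continuous.abs.continuousOn fun x hx => (abs_pos.2 (hΩn x hx).ne').ne')
    hΩ (tsupport_hardyRatio_subset.trans hfΩ)

theorem hardyRatio_rpow_eq (hΩn : ∀ x ∈ Ω, 0 < innerZ n x) (hfΩ : tsupport f ⊆ Ω) (hp : 1 < p)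
    (x : ℝ³) :
    hardyRatio n f x ^ p =
      hgradSq n x ^ ((p - 2) / 2) * (innerZ n x ^ (-p) * (hgradSq n x * |f x| ^ p)) := by
  by_cases hx : x ∈ tsupport f
  · exact (hardy_weight_eq (zero_lt_one.trans hp).ne' (hgradSq_nonneg x) (hΩn x (hfΩ hx))).symm
  · simp [hardyRatio, image_eq_zero_of_notMem_tsupport hx, zero_rpow (by linarith : p ≠ 0)]

theorem rpow_mul_hgradDot_abs_rpow_le (hΩn : ∀ x ∈ Ω, 0 < innerZ n x)
    (hf : Differentiable ℝ f) (hfΩ : tsupport f ⊆ Ω) (hp : 1 < p) (x : ℝ³) :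
    hgradSq n x ^ ((p - 2) / 2) * (innerZ n x ^ (1 - p) * hgradDot n (fun y => |f y| ^ p) x) ≤
      p * (hardyRatio n f x ^ (p - 1) * hgradNorm f x) := by
  rw [hgradDot_abs_rpow hf hp]
  by_cases hx : x ∈ tsupport f
  · exact hardy_flux_le hp (hgradSq_nonneg x) (hΩn x (hfΩ hx)) (abs_hgradDot_le x)
  · simp [hardyRatio, image_eq_zero_of_notMem_tsupport hx,
      zero_rpow (show p - 1 ≠ 0 by linarith)]

theorem integral_hardyRatio_rpow_le (hΩ : IsOpen Ω) (hΩn : ∀ x ∈ Ω, 0 < innerZ n x)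
    (hf : ContDiff ℝ 1 f) (hfc : HasCompactSupport f) (hfΩ : tsupport f ⊆ Ω) (hp : 1 < p) :
    (p - 1) * ∫ x, hardyRatio n f x ^ p ≤ p * ∫ x, hardyRatio n f x ^ (p - 1) * hgradNorm f x := by
  have hp0 : 0 < p := by linarith
  have hφΩ : tsupport (fun x => |f x| ^ p) ⊆ Ω := (tsupport_subset_of_forall_notMem fun x hx => by
    simp [image_eq_zero_of_notMem_tsupport hx, zero_rpow hp0.ne']).trans hfΩ
  have hbound : Integrable fun x => p * (hardyRatio n f x ^ (p - 1) * hgradNorm f x) :=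
    ((((continuous_hardyRatio hΩ hΩn hf.continuous hfΩ).rpow_const fun x =>
      Or.inr (by linarith)).mul (continuous_hgradNorm hf)).const_mul p
      ).integrable_of_hasCompactSupport
        (hfc.of_tsupport_subset tsupport_hgradNorm_subset).mul_left.mul_left
  calc (p - 1) * ∫ x, hardyRatio n f x ^ p
      = ∫ x, hgradSq n x ^ ((p - 2) / 2) *
          (innerZ n x ^ (1 - p) * hgradDot n (fun y => |f y| ^ p) x) := by
        simp_rw [hardyRatio_rpow_eq hΩn hfΩ hp]
        exact (integral_rpow_hgradDot_eq hΩ hΩn hp (by simpa using hf.norm_rpow hp)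
          (hfc.abs.rpow_const hp0.ne') hφΩ).symm
    _ ≤ ∫ x, p * (hardyRatio n f x ^ (p - 1) * hgradNorm f x) :=
        integral_mono_of_nonneg_right hbound
          (fun x => mul_nonneg hp0.le
            (mul_nonneg (rpow_nonneg (hardyRatio_nonneg x) _) hgradNorm_nonneg))
          (rpow_mul_hgradDot_abs_rpow_le hΩn (hf.differentiable one_ne_zero) hfΩ hp)
    _ = p * ∫ x, hardyRatio n f x ^ (p - 1) * hgradNorm f x := integral_const_mul _ _

theorem setIntegral_hgradSq_rpow_div_mul_eq (hfΩ : tsupport f ⊆ Ω) (hp : 0 < p) :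
    ∫ x in Ω, hgradSq n x ^ (p / 2) / |innerZ n x| ^ p * |f x| ^ p =
      ∫ x, hardyRatio n f x ^ p := by
  rw [setIntegral_eq_integral_of_forall_compl_eq_zero fun x hx => by
    simp [image_eq_zero_of_notMem_tsupport fun h => hx (hfΩ h), zero_rpow hp.ne']]
  simp only [hardyRatio, sqrt_mul_abs_div_rpow (hgradSq_nonneg _)]

theorem setIntegral_X1H_sq_add_X2H_sq_rpow_eq (hfΩ : tsupport f ⊆ Ω) (hp : 0 < p) :
    ∫ x in Ω, (X1H f x ^ 2 + X2H f x ^ 2) ^ (p / 2) = ∫ x, hgradNorm f x ^ p := by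
  rw [setIntegral_eq_integral_of_forall_compl_eq_zero fun x hx => by
    simp [X1H_of_notMem_tsupport fun h => hx (hfΩ h), X2H_of_notMem_tsupport fun h => hx (hfΩ h),
      zero_rpow (by positivity : p / 2 ≠ 0)]]
  congr 1 with x
  rw [hgradNorm, sqrt_eq_rpow, ← rpow_mul (by positivity)]
  ring_nf

end HardyRatio

theorem stmt_3_general (n : Fin 3 → ℝ)
    (Ω : Set (Fin 3 → ℝ)) (hΩ : IsOpen Ω)
    (hΩsub : Ω ⊆ {x : Fin 3 → ℝ | x 0 * n 0 + x 1 * n 1 + 2 * x 2 * n 2 > 0})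
    (p : ℝ) (hp : 1 < p)
    (f : (Fin 3 → ℝ) → ℝ)
    (hf : ContDiff ℝ (⊤ : ℕ∞) f) (hfc : HasCompactSupport f)
    (hfs : tsupport f ⊆ Ω) :
    ∫ x in Ω, ((X1H f x) ^ 2 + (X2H f x) ^ 2) ^ (p / 2) ≥
      ((p - 1) / p) ^ p *
        ∫ x in Ω,
          ((n 0 + 4 * x 1 * n 2) ^ 2 + (n 1 - 4 * x 0 * n 2) ^ 2) ^ (p / 2)
            / |x 0 * n 0 + x 1 * n 1 + 2 * x 2 * n 2| ^ p * |f x| ^ p := by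
  have hΩn : ∀ x ∈ Ω, 0 < innerZ n x := fun x hx => hΩsub hx
  have hf1 : ContDiff ℝ 1 f := hf.of_le (by exact_mod_cast le_top)
  have hp0 : 0 < p := by linarith
  change _ ≥ _ * ∫ x in Ω, hgradSq n x ^ (p / 2) / |innerZ n x| ^ p * |f x| ^ p
  rw [ge_iff_le, setIntegral_X1H_sq_add_X2H_sq_rpow_eq hfs hp0,
    setIntegral_hgradSq_rpow_div_mul_eq hfs hp0]
  exact integral_rpow_le_of_le_integral_rpow_sub_one_mul hp
    (continuous_hardyRatio hΩ hΩn hf1.continuous hfs)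
    (hfc.of_tsupport_subset tsupport_hardyRatio_subset) hardyRatio_nonneg
    (continuous_hgradNorm hf1) (hfc.of_tsupport_subset tsupport_hgradNorm_subset)
    (fun x => hgradNorm_nonneg) (integral_hardyRatio_rpow_le hΩ hΩn hf1 hfc hfs hp)

/-- the geometric Hardy inequality on starshaped sets in the
Heisenberg group, with `⟨Z(x), n⟩ = x₁n₁ + x₂n₂ + 2x₃n₃`. -/
theorem stmt_3 (n : Fin 3 → ℝ) (hn : n 0 ^ 2 + n 1 ^ 2 + n 2 ^ 2 = 1)
    (Ω : Set (Fin 3 → ℝ)) (hΩ : IsOpen Ω)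
    (hΩsub : Ω ⊆ {x : Fin 3 → ℝ | x 0 * n 0 + x 1 * n 1 + 2 * x 2 * n 2 > 0})
    (p : ℝ) (hp : 1 < p)
    (f : (Fin 3 → ℝ) → ℝ)
    (hf : ContDiff ℝ (⊤ : ℕ∞) f) (hfc : HasCompactSupport f)
    (hfs : tsupport f ⊆ Ω) :
    ∫ x in Ω, ((X1H f x) ^ 2 + (X2H f x) ^ 2) ^ (p / 2) ≥
      ((p - 1) / p) ^ p *
        ∫ x in Ω,
          ((n 0 + 4 * x 1 * n 2) ^ 2 + (n 1 - 4 * x 0 * n 2) ^ 2) ^ (p / 2)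
            / |x 0 * n 0 + x 1 * n 1 + 2 * x 2 * n 2| ^ p * |f x| ^ p :=
  stmt_3_general n Ω hΩ hΩsub p hp f hf hfc hfs
end

section
/- On ℝ³ with the Heisenberg horizontal gradient ∇_H f = (X₁f, X₂f), where X₁f(x) = ∂f/∂x₁ + 2x₂ ∂f/∂x₃ and X₂f(x) = ∂f/∂x₂ − 2x₁ ∂f/∂x₃, let Ω⁺ = {x ∈ ℝ³ : x₃ > 0}. Then for every f ∈ C₀^∞(Ω⁺): ∫_{Ω⁺} |∇_H f(x)|² dx ≥ ∫_{Ω⁺} ((x₁² + x₂²)/x₃²) |f(x)|² dx. -/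
/-!
Method of vector fields. Let `W = (w₁, w₂)` be `C¹` on an open set `U ⊇ tsupport f`. Expanding
`0 ≤ (X₁f - w₁ f)² + (X₂f - w₂ f)²` gives pointwise
`|∇_H f|² ≥ X₁(w₁ f²) + X₂(w₂ f²) + (-(X₁w₁ + X₂w₂) - |W|²) f²`,
and the first two terms integrate to zero: `X₁` and `X₂` have divergence-free coefficients, so
integration by parts kills them. For `W = (x₂/x₃, -x₁/x₃)` one finds `X₁w₁ + X₂w₂ = -2|x'|²/x₃²`
and `|W|² = |x'|²/x₃²`, so the weight is `|x'|²/x₃²` (in Lean `xᵢ` is `x (i - 1)`).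
-/

open MeasureTheory Real

section Support

variable {𝕜 E F : Type*} [NontriviallyNormedField 𝕜] [NormedAddCommGroup E] [NormedSpace 𝕜 E]
  [NormedAddCommGroup F] [NormedSpace 𝕜 F] {n : WithTop ℕ∞}

theorem contDiff_of_tsupport {f : E → F} (hf : ∀ x ∈ tsupport f, ContDiffAt 𝕜 n f x) :
    ContDiff 𝕜 n f :=
  contMDiff_iff_contDiff.1 (contMDiff_of_tsupport fun x hx => (hf x hx).contMDiffAt)

theorem ContDiffOn.contDiff_mul_of_tsupport_subset {w f : E → 𝕜} {U : Set E}
    (hw : ContDiffOn 𝕜 n w U) (hU : IsOpen U) (hf : ContDiff 𝕜 n f) (hfU : tsupport f ⊆ U) :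
    ContDiff 𝕜 n fun x => w x * f x :=
  contDiff_of_tsupport fun _ hx =>
    (hw.contDiffAt (hU.mem_nhds (hfU (tsupport_mul_subset_right hx)))).mul hf.contDiffAt

end Support

section DirectionalDerivative

variable {E : Type*} [NormedAddCommGroup E] [NormedSpace ℝ E] {g : E → ℝ}

theorem hasCompactSupport_fderiv_apply (hgc : HasCompactSupport g) (V : E → E) :
    HasCompactSupport fun x => fderiv ℝ g x (V x) :=
  (hgc.fderiv ℝ).mono fun x hx h => hx (by simp [h])

variable [MeasurableSpace E] {μ : Measure E}

theorem setIntegral_fderiv_apply_eq_integral {s : Set E} (hgs : tsupport g ⊆ s) (V : E → E) :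
    ∫ x in s, fderiv ℝ g x (V x) ∂μ = ∫ x, fderiv ℝ g x (V x) ∂μ :=
  setIntegral_eq_integral_of_forall_compl_eq_zero fun x hx => by
    rw [fderiv_of_notMem_tsupport ℝ fun h => hx (hgs h), zero_apply]

end DirectionalDerivative

section Coordinates

variable {ι : Type*}

theorem fderiv_coord_apply (i : ι) (x v : ι → ℝ) : fderiv ℝ (fun y => y i) x v = v i := by
  rw [(hasFDerivAt_apply (𝕜 := ℝ) i x).fderiv, ContinuousLinearMap.proj_apply]

variable [Fintype ι]

theorem fderiv_coord_div_apply (i j : ι) {x : ι → ℝ} (hx : x j ≠ 0) (v : ι → ℝ) :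
    fderiv ℝ (fun y => y i / y j) x v = (x j * v i - x i * v j) / x j ^ 2 := by
  have hinv : HasFDerivAt (fun y : ι → ℝ => (y j)⁻¹)
      ((-(x j ^ 2)⁻¹) • ContinuousLinearMap.proj j) x :=
    (hasDerivAt_inv hx).comp_hasFDerivAt x (hasFDerivAt_apply (𝕜 := ℝ) j x)
  simp only [div_eq_mul_inv]
  rw [((hasFDerivAt_apply (𝕜 := ℝ) i x).fun_mul hinv).fderiv]
  simp only [add_apply, smul_apply, ContinuousLinearMap.proj_apply, smul_eq_mul]
  field_simp
  ring

variable [DecidableEq ι] {μ : Measure (ι → ℝ)} [μ.IsAddHaarMeasure] {g : (ι → ℝ) → ℝ}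

theorem integral_fderiv_apply_eq_zero_of_divergence_eq_zero {V : (ι → ℝ) → ι → ℝ}
    (hV : ∀ i, ContDiff ℝ 1 fun x => V x i)
    (hdiv : ∀ x, ∑ i, fderiv ℝ (fun y => V y i) x (Pi.single i 1) = 0)
    (hg : ContDiff ℝ 1 g) (hgc : HasCompactSupport g) :
    ∫ x, fderiv ℝ g x (V x) ∂μ = 0 := by
  have hVg : ∀ i, Integrable (fun x => V x i * fderiv ℝ g x (Pi.single i 1)) μ := fun i =>
    ((hV i).continuous.mul ((hg.continuous_fderiv one_ne_zero).clm_apply continuous_const)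
      ).integrable_of_hasCompactSupport (hasCompactSupport_fderiv_apply hgc _).mul_left
  have hdVg : ∀ i, Integrable (fun x => fderiv ℝ (fun y => V y i) x (Pi.single i 1) * g x) μ :=
    fun i => (((hV i).continuous_fderiv one_ne_zero).clm_apply continuous_const).mul
      hg.continuous |>.integrable_of_hasCompactSupport hgc.mul_left
  have hparts : ∀ i, ∫ x, V x i * fderiv ℝ g x (Pi.single i 1) ∂μ
      = -∫ x, fderiv ℝ (fun y => V y i) x (Pi.single i 1) * g x ∂μ := fun i =>
    integral_mul_fderiv_eq_neg_fderiv_mul_of_integrable (hdVg i) (hVg i)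
      (((hV i).continuous.mul hg.continuous).integrable_of_hasCompactSupport hgc.mul_left)
      (fun x _ => (hV i).differentiable one_ne_zero x) (fun x _ => hg.differentiable one_ne_zero x)
  calc ∫ x, fderiv ℝ g x (V x) ∂μ
      = ∑ i, ∫ x, V x i * fderiv ℝ g x (Pi.single i 1) ∂μ := by
        rw [← integral_finsetSum _ fun i _ => hVg i]
        congr 1 with x
        conv_lhs => rw [pi_eq_sum_univ' (V x)]
        simp
    _ = -∫ x, (∑ i, fderiv ℝ (fun y => V y i) x (Pi.single i 1)) * g x ∂μ := by
        simp_rw [hparts, Finset.sum_mul]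
        rw [integral_finsetSum _ fun i _ => hdVg i, Finset.sum_neg_distrib]
    _ = 0 := by simp [hdiv]

end Coordinates

section Heisenberg

variable {g : (Fin 3 → ℝ) → ℝ}

theorem integral_X1H_eq_zero_s4 (hg : ContDiff ℝ 1 g) (hgc : HasCompactSupport g) :
    ∫ x, X1H g x = 0 :=
  integral_fderiv_apply_eq_zero_of_divergence_eq_zero (V := fun x => ![1, 0, 2 * x 1])
    (fun i => by fin_cases i <;> simp <;> fun_prop)
    (fun x => by
      simp (disch := fun_prop) [Fin.sum_univ_three, fderiv_const_mul, fderiv_coord_apply,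
        Pi.single_apply])
    hg hgc

theorem integral_X2H_eq_zero_s4 (hg : ContDiff ℝ 1 g) (hgc : HasCompactSupport g) :
    ∫ x, X2H g x = 0 :=
  integral_fderiv_apply_eq_zero_of_divergence_eq_zero (V := fun x => ![0, 1, -2 * x 0])
    (fun i => by fin_cases i <;> simp <;> fun_prop)
    (fun x => by
      simp (disch := fun_prop) [Fin.sum_univ_three, fderiv_const_mul, fderiv_coord_apply,
        Pi.single_apply])
    hg hgc

theorem continuous_X1H_s4 (hg : ContDiff ℝ 1 g) : Continuous (X1H g) :=
  (hg.continuous_fderiv one_ne_zero).clm_apply (by fun_prop)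

theorem continuous_X2H_s4 (hg : ContDiff ℝ 1 g) : Continuous (X2H g) :=
  (hg.continuous_fderiv one_ne_zero).clm_apply (by fun_prop)

theorem hasCompactSupport_X1H (hgc : HasCompactSupport g) : HasCompactSupport (X1H g) :=
  hasCompactSupport_fderiv_apply hgc _

theorem hasCompactSupport_X2H (hgc : HasCompactSupport g) : HasCompactSupport (X2H g) :=
  hasCompactSupport_fderiv_apply hgc _

theorem integrable_X1H (hg : ContDiff ℝ 1 g) (hgc : HasCompactSupport g) : Integrable (X1H g) :=
  (continuous_X1H_s4 hg).integrable_of_hasCompactSupport (hasCompactSupport_X1H hgc)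

theorem integrable_X2H (hg : ContDiff ℝ 1 g) (hgc : HasCompactSupport g) : Integrable (X2H g) :=
  (continuous_X2H_s4 hg).integrable_of_hasCompactSupport (hasCompactSupport_X2H hgc)

end Heisenberg

noncomputable def hardyWeight (w₁ w₂ : (Fin 3 → ℝ) → ℝ) (x : Fin 3 → ℝ) : ℝ :=
  -(X1H w₁ x + X2H w₂ x) - (w₁ x ^ 2 + w₂ x ^ 2)

theorem X1H_mul_sq_add_X2H_mul_sq_add_hardyWeight_le {w₁ w₂ f : (Fin 3 → ℝ) → ℝ}
    {x : Fin 3 → ℝ} (hw₁ : DifferentiableAt ℝ w₁ x) (hw₂ : DifferentiableAt ℝ w₂ x)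
    (hf : DifferentiableAt ℝ f x) :
    X1H (fun y => w₁ y * f y ^ 2) x + X2H (fun y => w₂ y * f y ^ 2) x
      + hardyWeight w₁ w₂ x * f x ^ 2 ≤ X1H f x ^ 2 + X2H f x ^ 2 := by
  have hf2 : DifferentiableAt ℝ (fun y => f y ^ 2) x := hf.pow 2
  have h₁ : X1H (fun y => w₁ y * f y ^ 2) x
      = w₁ x * (2 * f x * X1H f x) + f x ^ 2 * X1H w₁ x := by
    simp [X1H, fderiv_fun_mul hw₁ hf2, fderiv_fun_pow, hf]
  have h₂ : X2H (fun y => w₂ y * f y ^ 2) x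
      = w₂ x * (2 * f x * X2H f x) + f x ^ 2 * X2H w₂ x := by
    simp [X2H, fderiv_fun_mul hw₂ hf2, fderiv_fun_pow, hf]
  rw [h₁, h₂, hardyWeight]
  nlinarith [sq_nonneg (X1H f x - w₁ x * f x), sq_nonneg (X2H f x - w₂ x * f x)]

theorem continuousOn_hardyWeight {U : Set (Fin 3 → ℝ)} (hU : IsOpen U)
    {w₁ w₂ : (Fin 3 → ℝ) → ℝ} (hw₁ : ContDiffOn ℝ 1 w₁ U) (hw₂ : ContDiffOn ℝ 1 w₂ U) :
    ContinuousOn (hardyWeight w₁ w₂) U := by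
  have hX₁ : ContinuousOn (X1H w₁) U :=
    (hw₁.continuousOn_fderiv_of_isOpen hU le_rfl).clm_apply (by fun_prop)
  have hX₂ : ContinuousOn (X2H w₂) U :=
    (hw₂.continuousOn_fderiv_of_isOpen hU le_rfl).clm_apply (by fun_prop)
  exact ((hX₁.add hX₂).neg).sub ((hw₁.continuousOn.pow 2).add (hw₂.continuousOn.pow 2))

theorem setIntegral_hardyWeight_mul_sq_le {U : Set (Fin 3 → ℝ)} (hU : IsOpen U)
    {w₁ w₂ f : (Fin 3 → ℝ) → ℝ} (hw₁ : ContDiffOn ℝ 1 w₁ U) (hw₂ : ContDiffOn ℝ 1 w₂ U)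
    (hf : ContDiff ℝ 1 f) (hfc : HasCompactSupport f) (hfU : tsupport f ⊆ U) :
    ∫ x in U, hardyWeight w₁ w₂ x * f x ^ 2 ≤ ∫ x in U, (X1H f x ^ 2 + X2H f x ^ 2) := by
  have hf2 : ContDiff ℝ 1 fun x => f x ^ 2 := hf.pow 2
  have hf2c : HasCompactSupport fun x => f x ^ 2 :=
    hfc.comp_left (g := fun t : ℝ => t ^ 2) (zero_pow two_ne_zero)
  have hf2U : tsupport (fun x => f x ^ 2) ⊆ U :=
    (tsupport_comp_subset (g := fun t : ℝ => t ^ 2) (zero_pow two_ne_zero) f).trans hfU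
  have hg₁ := hw₁.contDiff_mul_of_tsupport_subset hU hf2 hf2U
  have hg₂ := hw₂.contDiff_mul_of_tsupport_subset hU hf2 hf2U
  have hX₁ : ∫ x in U, X1H (fun y => w₁ y * f y ^ 2) x = 0 :=
    (setIntegral_fderiv_apply_eq_integral (tsupport_mul_subset_right.trans hf2U) _).trans
      (integral_X1H_eq_zero_s4 hg₁ hf2c.mul_left)
  have hX₂ : ∫ x in U, X2H (fun y => w₂ y * f y ^ 2) x = 0 :=
    (setIntegral_fderiv_apply_eq_integral (tsupport_mul_subset_right.trans hf2U) _).trans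
      (integral_X2H_eq_zero_s4 hg₂ hf2c.mul_left)
  have hintX : Integrable (fun x => X1H (fun y => w₁ y * f y ^ 2) x
      + X2H (fun y => w₂ y * f y ^ 2) x) :=
    (integrable_X1H hg₁ hf2c.mul_left).add (integrable_X2H hg₂ hf2c.mul_left)
  have hintW : Integrable fun x => hardyWeight w₁ w₂ x * f x ^ 2 :=
    (((continuousOn_hardyWeight hU hw₁ hw₂).mul hf2.continuous.continuousOn
      ).continuous_of_tsupport_subset hU (tsupport_mul_subset_right.trans hf2U)
      ).integrable_of_hasCompactSupport hf2c.mul_left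
  have hintF : Integrable fun x => X1H f x ^ 2 + X2H f x ^ 2 :=
    .add ((continuous_X1H_s4 hf).memLp_of_hasCompactSupport (hasCompactSupport_X1H hfc)).integrable_sq
      ((continuous_X2H_s4 hf).memLp_of_hasCompactSupport (hasCompactSupport_X2H hfc)).integrable_sq
  calc ∫ x in U, hardyWeight w₁ w₂ x * f x ^ 2
      = ∫ x in U, (X1H (fun y => w₁ y * f y ^ 2) x + X2H (fun y => w₂ y * f y ^ 2) x
          + hardyWeight w₁ w₂ x * f x ^ 2) := by
        rw [integral_add hintX.integrableOn hintW.integrableOn,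
          integral_add (integrable_X1H hg₁ hf2c.mul_left).integrableOn
            (integrable_X2H hg₂ hf2c.mul_left).integrableOn, hX₁, hX₂, zero_add, zero_add]
    _ ≤ ∫ x in U, (X1H f x ^ 2 + X2H f x ^ 2) :=
        setIntegral_mono_on (hintX.add hintW).integrableOn hintF.integrableOn hU.measurableSet
          fun x hx => X1H_mul_sq_add_X2H_mul_sq_add_hardyWeight_le
            ((hw₁.differentiableOn one_ne_zero).differentiableAt (hU.mem_nhds hx))
            ((hw₂.differentiableOn one_ne_zero).differentiableAt (hU.mem_nhds hx))
            (hf.differentiable one_ne_zero x)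

theorem hardyWeight_coord_div {x : Fin 3 → ℝ} (hx : x 2 ≠ 0) :
    hardyWeight (fun y => y 1 / y 2) (fun y => -(y 0 / y 2)) x
      = (x 0 ^ 2 + x 1 ^ 2) / x 2 ^ 2 := by
  simp only [hardyWeight, X1H, X2H, fderiv_fun_neg, neg_apply, fderiv_coord_div_apply _ _ hx,
    Matrix.cons_val_zero, Matrix.cons_val_one, Matrix.cons_val]
  field_simp
  ring

/-- the L² Hardy inequality on the half-space `{x₃ > 0}` of the
Heisenberg group (Luan–Young). -/
theorem stmt_4
    (f : (Fin 3 → ℝ) → ℝ)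
    (hf : ContDiff ℝ (⊤ : ℕ∞) f) (hfc : HasCompactSupport f)
    (hfs : tsupport f ⊆ {x : Fin 3 → ℝ | x 2 > 0}) :
    ∫ x in {x : Fin 3 → ℝ | x 2 > 0}, ((X1H f x) ^ 2 + (X2H f x) ^ 2) ≥
      ∫ x in {x : Fin 3 → ℝ | x 2 > 0},
        ((x 0) ^ 2 + (x 1) ^ 2) / (x 2) ^ 2 * |f x| ^ 2 := by
  have hΩ : IsOpen {x : Fin 3 → ℝ | x 2 > 0} := isOpen_lt continuous_const (continuous_apply 2)
  have hw : ∀ i, ContDiffOn ℝ 1 (fun y : Fin 3 → ℝ => y i / y 2) {x | x 2 > 0} := fun _ =>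
    ContDiffOn.div (by fun_prop) (by fun_prop) fun _ hx => hx.ne'
  rw [ge_iff_le, setIntegral_congr_fun hΩ.measurableSet fun x hx => by
    rw [sq_abs, ← hardyWeight_coord_div hx.ne']]
  exact setIntegral_hardyWeight_mul_sq_le hΩ (hw 1) (hw 0).neg (hf.of_le (by simp)) hfc hfs
end

section
/- On ℝ² with the Grushin gradient ∇_X f = (∂f/∂x₁, x₁ ∂f/∂x₂), let d ∈ ℝ and Ω⁺ = {x ∈ ℝ² : x₁ > d}. Then for every p > 1 and every f ∈ C₀^∞(Ω⁺): ∫_{Ω⁺} |∇_X f(x)|^p dx ≥ ((p−1)/p)^p ∫_{Ω⁺} ( |f(x)|^p / |x₁ − d|^p ) dx. -/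
open MeasureTheory Real

/-- The Grushin vector field `X₁ f = ∂f/∂x₁` on `ℝ²`. -/
noncomputable def X1G (f : (Fin 2 → ℝ) → ℝ) (x : Fin 2 → ℝ) : ℝ :=
  fderiv ℝ f x ![1, 0]

/-- The Grushin vector field `X₂ f = x₁ ∂f/∂x₂` on `ℝ²`. -/
noncomputable def X2G (f : (Fin 2 → ℝ) → ℝ) (x : Fin 2 → ℝ) : ℝ :=
  fderiv ℝ f x ![0, x 0]

/-!
Since `|∇_X f| ≥ |∂₁ f|`, it suffices to integrate over the horizontal lines `x₂ = y` (Fubini) the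
one-dimensional Hardy inequality `((p-1)/p)^p ∫ |g|^p / (t-d)^p ≤ ∫ |g'|^p` for `g` supported in
`(d, ∞)`. For `u = |g|^p`, integration by parts against `(t-d)^(1-p)` gives
`∫ u' (t-d)^(1-p) = (p-1) ∫ u / (t-d)^p`, while `|u'| ≤ p |g|^(p-1) |g'|`. Young's inequality
`p a^(p-1) b ≤ (p-1) a^p + b^p` with `a = ((p-1)/p) |g| / (t-d)` and `b = |g'|` then bounds
`((p-1)/p)^p |g|^p / (t-d)^p` pointwise by `|g'|^p` minus a multiple of the integrand of that
identity, whose integral vanishes.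
-/

open Set Filter Topology

lemma mul_rpow_sub_one_mul_le {p a b : ℝ} (hp : 1 < p) (ha : 0 ≤ a) (hb : 0 ≤ b) :
    p * a ^ (p - 1) * b ≤ (p - 1) * a ^ p + b ^ p := by
  have hp0 : 0 < p := by linarith
  have key := geom_mean_le_arith_mean2_weighted (w₁ := (p - 1) / p) (w₂ := 1 / p)
    (by bound) (by positivity) (rpow_nonneg ha p) (rpow_nonneg hb p) (by field_simp; ring)
  rw [← rpow_mul ha, ← rpow_mul hb, mul_div_cancel₀ _ hp0.ne', mul_one_div_cancel hp0.ne',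
    rpow_one] at key
  calc p * a ^ (p - 1) * b = p * (a ^ (p - 1) * b) := by ring
    _ ≤ p * ((p - 1) / p * a ^ p + 1 / p * b ^ p) := by gcongr
    _ = (p - 1) * a ^ p + b ^ p := by field_simp

-- `m - (p - 1) * a ^ p` stands for the integrand of `integral_deriv_mul_sub_rpow`.
lemma hardy_pointwise {p a b m : ℝ} (hp : 1 < p) (ha : 0 ≤ a) (hb : 0 ≤ b)
    (hm : m ≤ p * a ^ (p - 1) * b) :
    ((p - 1) / p) ^ p * a ^ p ≤ b ^ p - ((p - 1) / p) ^ (p - 1) * (m - (p - 1) * a ^ p) := by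
  have hp0 : 0 < p := by linarith
  have hpc : p * ((p - 1) / p) = p - 1 := by field_simp
  generalize (p - 1) / p = c at hpc ⊢
  have hc : 0 < c := by nlinarith
  have young := mul_rpow_sub_one_mul_le hp (mul_nonneg hc.le ha) hb
  have hcp : c ^ p = c ^ (p - 1) * c := by
    rw [← rpow_add_one hc.ne', sub_add_cancel]
  rw [mul_rpow hc.le ha, mul_rpow hc.le ha, hcp] at young
  have hcm : c ^ (p - 1) * m ≤ c ^ (p - 1) * (p * a ^ (p - 1) * b) :=
    mul_le_mul_of_nonneg_left hm (by positivity)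
  rw [hcp]
  linear_combination hcm + young + c ^ (p - 1) * a ^ p * hpc

section Support

variable {X : Type*} [TopologicalSpace X] {φ w : X → ℝ} {U : Set X}

lemma Continuous.mul_continuousOn_of_tsupport_subset (hφ : Continuous φ) (hw : ContinuousOn w U)
    (hU : IsOpen U) (hφU : tsupport φ ⊆ U) : Continuous (fun x ↦ φ x * w x) :=
  (hφ.continuousOn.mul hw).continuous_of_tsupport_subset hU (tsupport_mul_subset_left.trans hφU)

lemma Continuous.integrable_mul_of_tsupport_subset [MeasurableSpace X] [OpensMeasurableSpace X]
    {μ : Measure X} [IsFiniteMeasureOnCompacts μ] (hφ : Continuous φ) (hφc : HasCompactSupport φ)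
    (hw : ContinuousOn w U) (hU : IsOpen U) (hφU : tsupport φ ⊆ U) :
    Integrable (fun x ↦ φ x * w x) μ :=
  (hφ.mul_continuousOn_of_tsupport_subset hw hU hφU).integrable_of_hasCompactSupport
    hφc.mul_right

end Support

lemma continuousOn_sub_rpow (d q : ℝ) : ContinuousOn (fun t : ℝ ↦ (t - d) ^ q) (Ioi d) :=
  fun _ ht ↦ ((continuous_sub_right d).continuousAt.rpow_const
    (Or.inl (sub_pos.2 ht).ne')).continuousWithinAt

lemma continuousOn_inv_abs_sub_rpow (d q : ℝ) :
    ContinuousOn (fun t : ℝ ↦ (|t - d| ^ q)⁻¹) (Ioi d) :=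
  fun _ ht ↦ ((continuous_sub_right d).abs.continuousAt.rpow_const
    (Or.inl (abs_pos.2 (sub_pos.2 ht).ne').ne')).inv₀
    (rpow_pos_of_pos (abs_pos.2 (sub_pos.2 ht).ne') q).ne' |>.continuousWithinAt

section HalfLine

variable {d : ℝ} {u : ℝ → ℝ}

lemma integrable_div_abs_sub_rpow (hu : Continuous u) (huc : HasCompactSupport u)
    (hus : tsupport u ⊆ Ioi d) (p : ℝ) : Integrable (fun t ↦ u t / |t - d| ^ p) := by
  simp_rw [div_eq_mul_inv]
  exact hu.integrable_mul_of_tsupport_subset huc (continuousOn_inv_abs_sub_rpow d p) isOpen_Ioi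
    hus

lemma integrable_mul_sub_rpow (hu : Continuous u) (huc : HasCompactSupport u)
    (hus : tsupport u ⊆ Ioi d) (q : ℝ) : Integrable (fun t ↦ u t * (t - d) ^ q) :=
  hu.integrable_mul_of_tsupport_subset huc (continuousOn_sub_rpow d q) isOpen_Ioi hus

lemma integral_deriv_mul_sub_rpow (hu : ContDiff ℝ 1 u) (huc : HasCompactSupport u)
    (hus : tsupport u ⊆ Ioi d) (p : ℝ) :
    ∫ t, deriv u t * (t - d) ^ (1 - p) = (p - 1) * ∫ t, u t / |t - d| ^ p := by
  have hderiv : ∀ t, HasDerivAt (fun t ↦ u t * (t - d) ^ (1 - p))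
      (deriv u t * (t - d) ^ (1 - p) - (p - 1) * (u t / |t - d| ^ p)) t := by
    intro t
    by_cases ht : t ∈ tsupport u
    · have htd : 0 < t - d := sub_pos.2 (hus ht)
      refine ((hu.differentiable one_ne_zero t).hasDerivAt.mul
        (((hasDerivAt_id t).sub_const d).rpow_const (Or.inl htd.ne'))).congr_deriv ?_
      rw [id, abs_of_pos htd, show 1 - p - 1 = -p by ring, rpow_neg htd.le]
      ring
    · have hu0 : u =ᶠ[𝓝 t] 0 := notMem_tsupport_iff_eventuallyEq.1 ht
      have h0 : (fun t ↦ u t * (t - d) ^ (1 - p)) =ᶠ[𝓝 t] fun _ ↦ 0 :=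
        hu0.mono fun s hs ↦ by simp [hs]
      simpa [hu0.eq_of_nhds, hu0.deriv_eq] using
        (hasDerivAt_const t (0 : ℝ)).congr_of_eventuallyEq h0
  have hM := integrable_mul_sub_rpow (hu.continuous_deriv le_rfl) huc.deriv
    (tsupport_deriv_subset.trans hus) (1 - p)
  have hW := integrable_div_abs_sub_rpow hu.continuous huc hus p
  have hF := integrable_mul_sub_rpow hu.continuous huc hus (1 - p)
  have := integral_eq_zero_of_hasDerivAt_of_integrable hderiv (hM.sub (hW.const_mul _)) hF
  rw [integral_sub hM (hW.const_mul _), integral_const_mul] at this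
  linarith

end HalfLine

section OneDim

variable {E : Type*} [NormedAddCommGroup E] [InnerProductSpace ℝ E] {p d : ℝ} {g : ℝ → E}

lemma deriv_norm_rpow_le (hp : 1 < p) (hg : Differentiable ℝ g) (t : ℝ) :
    deriv (fun s ↦ ‖g s‖ ^ p) t ≤ p * ‖g t‖ ^ (p - 1) * ‖deriv g t‖ := by
  have := norm_fderiv_norm_rpow_le hg (x := t) hp
  rw [← norm_deriv_eq_norm_fderiv, ← norm_deriv_eq_norm_fderiv, Real.norm_eq_abs] at this
  exact (le_abs_self _).trans this

lemma hardy_integrand_le (hp : 1 < p) (hg : Differentiable ℝ g) (hgs : tsupport g ⊆ Ioi d)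
    (t : ℝ) :
    ((p - 1) / p) ^ p * (‖g t‖ ^ p / |t - d| ^ p) ≤ ‖deriv g t‖ ^ p - ((p - 1) / p) ^ (p - 1) *
      (deriv (fun s ↦ ‖g s‖ ^ p) t * (t - d) ^ (1 - p) - (p - 1) * (‖g t‖ ^ p / |t - d| ^ p)) := by
  by_cases ht : t ∈ tsupport g
  · have htd : 0 < t - d := sub_pos.2 (hgs ht)
    have hapow : ∀ q : ℝ, (‖g t‖ / |t - d|) ^ q = ‖g t‖ ^ q / |t - d| ^ q := fun q ↦
      div_rpow (norm_nonneg _) (abs_nonneg _) q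
    rw [← hapow]
    refine hardy_pointwise hp (by positivity) (norm_nonneg _) ?_
    rw [hapow, abs_of_pos htd, div_eq_mul_inv, ← rpow_neg htd.le, neg_sub]
    calc deriv (fun s ↦ ‖g s‖ ^ p) t * (t - d) ^ (1 - p)
        ≤ p * ‖g t‖ ^ (p - 1) * ‖deriv g t‖ * (t - d) ^ (1 - p) := by
          gcongr
          exact deriv_norm_rpow_le hp hg t
      _ = _ := by ring
  · have hp0 : p ≠ 0 := by linarith
    have hu0 : (fun s ↦ ‖g s‖ ^ p) =ᶠ[𝓝 t] 0 :=
      (notMem_tsupport_iff_eventuallyEq.1 ht).mono fun s hs ↦ by simp [hs, zero_rpow hp0]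
    simp only [hu0.eq_of_nhds, hu0.deriv_eq, deriv_zero, Pi.zero_apply, zero_div, mul_zero,
      zero_mul, sub_self, sub_zero]
    positivity

theorem hardy_inequality_Ioi (hp : 1 < p) (hg : ContDiff ℝ 1 g) (hgc : HasCompactSupport g)
    (hgs : tsupport g ⊆ Ioi d) :
    ((p - 1) / p) ^ p * ∫ t, ‖g t‖ ^ p / |t - d| ^ p ≤ ∫ t, ‖deriv g t‖ ^ p := by
  set c := (p - 1) / p
  set u : ℝ → ℝ := fun t ↦ ‖g t‖ ^ p
  have hu : ContDiff ℝ 1 u := hg.norm_rpow hp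
  have hnorm0 : (fun v : E ↦ ‖v‖ ^ p) 0 = 0 := by simp [zero_rpow (by linarith : p ≠ 0)]
  have huc : HasCompactSupport u := hgc.comp_left (g := fun v : E ↦ ‖v‖ ^ p) hnorm0
  have hus : tsupport u ⊆ Ioi d :=
    (tsupport_comp_subset (g := fun v : E ↦ ‖v‖ ^ p) hnorm0 g).trans hgs
  have hA := integrable_div_abs_sub_rpow hu.continuous huc hus p
  have hM := integrable_mul_sub_rpow (hu.continuous_deriv le_rfl) huc.deriv
    (tsupport_deriv_subset.trans hus) (1 - p)
  have hB : Integrable (fun t ↦ ‖deriv g t‖ ^ p) :=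
    ((hg.continuous_deriv le_rfl).norm.rpow_const fun _ ↦ Or.inr (by linarith))
      |>.integrable_of_hasCompactSupport (hgc.deriv.comp_left (g := fun v : E ↦ ‖v‖ ^ p) hnorm0)
  have hMA : Integrable
      (fun t ↦ deriv u t * (t - d) ^ (1 - p) - (p - 1) * (u t / |t - d| ^ p)) :=
    hM.sub (hA.const_mul _)
  calc c ^ p * ∫ t, u t / |t - d| ^ p = ∫ t, c ^ p * (u t / |t - d| ^ p) :=
        (integral_const_mul _ _).symm
    _ ≤ ∫ t, ‖deriv g t‖ ^ p -
          c ^ (p - 1) * (deriv u t * (t - d) ^ (1 - p) - (p - 1) * (u t / |t - d| ^ p)) :=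
        integral_mono (hA.const_mul _) (hB.sub (hMA.const_mul _))
          (hardy_integrand_le hp (hg.differentiable one_ne_zero) hgs)
    _ = ∫ t, ‖deriv g t‖ ^ p := by
        rw [integral_sub hB (hMA.const_mul _), integral_const_mul,
          integral_sub hM (hA.const_mul _), integral_const_mul,
          integral_deriv_mul_sub_rpow hu huc hus p, sub_self, mul_zero, sub_zero]

end OneDim

lemma hasDerivAt_vec_two_fst (y t : ℝ) :
    HasDerivAt (fun t : ℝ ↦ (![t, y] : Fin 2 → ℝ)) ![1, 0] t := by
  rw [hasDerivAt_pi]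
  simpa [Fin.forall_fin_two, hasDerivAt_const] using hasDerivAt_id' t

lemma abs_rpow_le_sq_add_sq_rpow (a b : ℝ) {p : ℝ} (hp : 0 ≤ p) :
    |a| ^ p ≤ (a ^ 2 + b ^ 2) ^ (p / 2) := by
  calc |a| ^ p = (a ^ 2) ^ (p / 2) := by
        rw [← sq_abs, ← rpow_natCast, ← rpow_mul (abs_nonneg a)]; congr 1; ring
    _ ≤ (a ^ 2 + b ^ 2) ^ (p / 2) := by gcongr; nlinarith

lemma integral_fin_two_eq_integral_integral {G : (Fin 2 → ℝ) → ℝ} (hG : Integrable G) :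
    ∫ x, G x = ∫ y, ∫ t, G ![t, y] ∧ Integrable (fun y ↦ ∫ t, G ![t, y]) := by
  have he := (volume_preserving_finTwoArrow ℝ).symm
  have hprod : Integrable (fun z : ℝ × ℝ ↦ G ![z.1, z.2]) (volume.prod volume) := by
    rw [← Measure.volume_eq_prod]
    exact he.integrable_comp_emb (MeasurableEquiv.measurableEmbedding _) |>.2 hG
  refine ⟨?_, hprod.integral_prod_right⟩
  rw [← he.integral_comp' G, Measure.volume_eq_prod]
  exact integral_prod_symm _ hprod

lemma integrable_abs_fderiv_apply_rpow {E : Type*} [NormedAddCommGroup E] [NormedSpace ℝ E]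
    [MeasurableSpace E] [OpensMeasurableSpace E] {μ : Measure E} [IsFiniteMeasureOnCompacts μ]
    {f : E → ℝ} (hf : ContDiff ℝ 1 f) (hfc : HasCompactSupport f) (v : E) {p : ℝ} (hp : 0 < p) :
    Integrable (fun x ↦ |fderiv ℝ f x v| ^ p) μ :=
  (((hf.continuous_fderiv one_ne_zero).clm_apply continuous_const).abs.rpow_const
    fun _ ↦ Or.inr hp.le).integrable_of_hasCompactSupport
    ((hfc.fderiv_apply (𝕜 := ℝ) v).comp_left (g := fun s : ℝ ↦ |s| ^ p)
      (by simp [zero_rpow hp.ne']))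

theorem hardy_inequality_halfPlane {p d : ℝ} (hp : 1 < p) {f : (Fin 2 → ℝ) → ℝ}
    (hf : ContDiff ℝ 1 f) (hfc : HasCompactSupport f) (hfs : tsupport f ⊆ {x | d < x 0}) :
    ((p - 1) / p) ^ p * ∫ x, |f x| ^ p / |x 0 - d| ^ p ≤ ∫ x, |X1G f x| ^ p := by
  have hp0 : 0 < p := by linarith
  have hslice : ∀ y, ∫ t, ((p - 1) / p) ^ p * (|f ![t, y]| ^ p / |t - d| ^ p) ≤
      ∫ t, |X1G f ![t, y]| ^ p := fun y ↦ by
    have hderiv : ∀ t, deriv (fun t ↦ f ![t, y]) t = X1G f ![t, y] := fun t ↦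
      ((hf.differentiable one_ne_zero _).hasFDerivAt.comp_hasDerivAt t
        (hasDerivAt_vec_two_fst y t)).deriv
    have hsupp : tsupport (fun t ↦ f ![t, y]) ⊆ (fun t ↦ ![t, y]) ⁻¹' tsupport f :=
      tsupport_comp_subset_preimage f (by fun_prop)
    have hcompact : HasCompactSupport (fun t ↦ f ![t, y]) :=
      (hfc.image (continuous_apply 0)).of_isClosed_subset (isClosed_tsupport _)
        fun t ht ↦ ⟨_, hsupp ht, rfl⟩
    have := hardy_inequality_Ioi hp (g := fun t ↦ f ![t, y])
      (hf.comp (contDiff_pi.2 (Fin.forall_fin_two.2 ⟨contDiff_id, contDiff_const⟩))) hcompact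
      fun t ht ↦ hfs (hsupp ht)
    simpa [integral_const_mul, hderiv] using this
  have habs0 : (fun s : ℝ ↦ |s| ^ p) 0 = 0 := by simp [zero_rpow hp0.ne']
  have hRHS : Integrable (fun x : Fin 2 → ℝ ↦ |f x| ^ p / |x 0 - d| ^ p) := by
    simp_rw [div_eq_mul_inv]
    exact (hf.continuous.abs.rpow_const fun _ ↦ Or.inr hp0.le).integrable_mul_of_tsupport_subset
      (hfc.comp_left (g := fun s : ℝ ↦ |s| ^ p) habs0)
      ((continuousOn_inv_abs_sub_rpow d p).comp (continuous_apply 0).continuousOn fun _ hx ↦ hx)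
      (isOpen_lt continuous_const (continuous_apply 0))
      ((tsupport_comp_subset (g := fun s : ℝ ↦ |s| ^ p) habs0 f).trans hfs)
  obtain ⟨hRHS_eq, hRHS_int⟩ :=
    integral_fin_two_eq_integral_integral (hRHS.const_mul (((p - 1) / p) ^ p))
  obtain ⟨hX1_eq, hX1_int⟩ := integral_fin_two_eq_integral_integral
    (integrable_abs_fderiv_apply_rpow hf hfc ![1, 0] hp0 (μ := volume))
  rw [← integral_const_mul, hRHS_eq]
  exact (integral_mono hRHS_int hX1_int hslice).trans_eq hX1_eq.symm

/-- the sharp Hardy inequality on the half-space `{x₁ > d}` of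
the Grushin plane. -/
theorem stmt_7 (d : ℝ) (p : ℝ) (hp : 1 < p)
    (f : (Fin 2 → ℝ) → ℝ)
    (hf : ContDiff ℝ (⊤ : ℕ∞) f) (hfc : HasCompactSupport f)
    (hfs : tsupport f ⊆ {x : Fin 2 → ℝ | x 0 > d}) :
    ∫ x in {x : Fin 2 → ℝ | x 0 > d},
        ((X1G f x) ^ 2 + (X2G f x) ^ 2) ^ (p / 2) ≥
      ((p - 1) / p) ^ p *
        ∫ x in {x : Fin 2 → ℝ | x 0 > d}, |f x| ^ p / |x 0 - d| ^ p := by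
  have hp0 : 0 < p := by linarith
  have hf1 : ContDiff ℝ 1 f := hf.of_le (mod_cast le_top)
  have hf0 : ∀ x ∉ {x : Fin 2 → ℝ | x 0 > d}, f x = 0 := fun x hx ↦
    image_eq_zero_of_notMem_tsupport fun h ↦ hx (hfs h)
  have hgrad0 : ∀ x, fderiv ℝ f x = 0 → ((X1G f x) ^ 2 + (X2G f x) ^ 2) ^ (p / 2) = 0 :=
    fun x hx ↦ by simp [X1G, X2G, hx, zero_rpow (by positivity : p / 2 ≠ 0)]
  have hgrad : Integrable (fun x ↦ ((X1G f x) ^ 2 + (X2G f x) ^ 2) ^ (p / 2)) := by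
    have hfd := hf1.continuous_fderiv one_ne_zero
    refine Continuous.integrable_of_hasCompactSupport ?_
      ((hfc.fderiv (𝕜 := ℝ)).mono fun x hx h ↦ hx (hgrad0 x h))
    exact (((hfd.clm_apply continuous_const).pow 2).add ((hfd.clm_apply
      (by fun_prop)).pow 2)).rpow_const fun _ ↦ Or.inr (by positivity)
  rw [ge_iff_le, setIntegral_eq_integral_of_forall_compl_eq_zero fun x hx ↦ by
      simp [hf0 x hx, zero_rpow hp0.ne'],
    setIntegral_eq_integral_of_forall_compl_eq_zero fun x hx ↦
      hgrad0 x (image_eq_zero_of_notMem_tsupport fun h ↦ hx (hfs (tsupport_fderiv_subset ℝ h)))]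
  calc ((p - 1) / p) ^ p * ∫ x, |f x| ^ p / |x 0 - d| ^ p ≤ ∫ x, |X1G f x| ^ p :=
        hardy_inequality_halfPlane hp hf1 hfc hfs
    _ ≤ _ := integral_mono (integrable_abs_fderiv_apply_rpow hf1 hfc ![1, 0] hp0) hgrad
        fun x ↦ abs_rpow_le_sq_add_sq_rpow _ _ hp0.le
end
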